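/- arXiv:2103.08240 — 7 statements merged into one kernel-verified Lean document; each statement's English description precedes it below -/
import Mathlib

section
/- Let ψ be a Cartan–Hadamard model function, let T ∈ (0,∞], and let u be a radial solution on [0,T) with initial datum α > 0. Then the energy function F_u is differentiable on (0,T) with F_u′(r) = −(n−1)·(ψ′(r)/ψ(r))·|u′(r)|^p ≤ 0 for every r ∈ (0,T); consequently F_u(r) ≤ α^{q+1}/(q+1) for all r ∈ [0,T), and in particular both u and u′ are bounded on [0,T). -/
open Real Filter MeasureTheory
open scoped ENNReal Topology

/-- The volume-to-surface ratio `Θ(r) = (∫₀ʳ ψ(s)^{n-1} ds) / ψ(r)^{n-1}`. -/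
noncomputable def Theta (n : ℕ) (ψ : ℝ → ℝ) (r : ℝ) : ℝ :=
  (∫ s in (0:ℝ)..r, ψ s ^ (n - 1)) / ψ r ^ (n - 1)

/-- A Cartan–Hadamard model function: smooth, `ψ(0)=0`, `ψ'(0)=1`, convex on `[0,∞)`,
positive on `(0,∞)`. -/
def IsCHModel (ψ : ℝ → ℝ) : Prop :=
  ContDiff ℝ (⊤ : ℕ∞) ψ ∧ ψ 0 = 0 ∧ deriv ψ 0 = 1 ∧
    (∀ r : ℝ, 0 ≤ r → 0 ≤ deriv (deriv ψ) r) ∧ (∀ r : ℝ, 0 < r → 0 < ψ r)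

/-- A radial solution on `[0,T)` (with `T ∈ (0,∞]`) with initial datum `α`:
`u ∈ C¹([0,T))`, `u(0)=α`, `u'(0)=0`, `u>0` on `[0,T)`, and
`(ψ^{n-1} |u'|^{p-2} u')' = -ψ^{n-1} u^q` on `(0,T)`. -/
structure IsRadialSolution (n : ℕ) (p q : ℝ) (ψ : ℝ → ℝ) (T : ℝ≥0∞) (α : ℝ)
    (u : ℝ → ℝ) : Prop where
  init : u 0 = α
  deriv_init : deriv u 0 = 0
  pos : ∀ r : ℝ, 0 ≤ r → ENNReal.ofReal r < T → 0 < u r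
  diff : ∀ r : ℝ, 0 ≤ r → ENNReal.ofReal r < T → DifferentiableAt ℝ u r
  deriv_cont : ContinuousOn (deriv u) {r : ℝ | 0 ≤ r ∧ ENNReal.ofReal r < T}
  eqn : ∀ r : ℝ, 0 < r → ENNReal.ofReal r < T →
    HasDerivAt (fun s => ψ s ^ (n - 1) * |deriv u s| ^ (p - 2) * deriv u s)
      (-(ψ r ^ (n - 1) * u r ^ q)) r

/-- The energy function `F_u(r) = ((p-1)/p)|u'(r)|^p + u(r)^{q+1}/(q+1)`. -/
noncomputable def energyF (p q : ℝ) (u : ℝ → ℝ) (r : ℝ) : ℝ :=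
  (p - 1) / p * |deriv u r| ^ p + u r ^ (q + 1) / (q + 1)

/-- The Pohozaev function
`P_u(r) = (∫₀ʳ ψ^{n-1}) F_u(r) + (ψ(r)^{n-1}/(q+1)) |u'(r)|^{p-2} u'(r) u(r)`. -/
noncomputable def pohozaevP (n : ℕ) (p q : ℝ) (ψ u : ℝ → ℝ) (r : ℝ) : ℝ :=
  (∫ s in (0:ℝ)..r, ψ s ^ (n - 1)) * energyF p q u r +
    ψ r ^ (n - 1) / (q + 1) * (|deriv u r| ^ (p - 2) * deriv u r * u r)

/-- `K(r) = ((p-1)/p + 1/(q+1)) ψ(r)^{n-1} - (n-1)(ψ'(r)/ψ(r)) ∫₀ʳ ψ^{n-1}`. -/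
noncomputable def Kfun (n : ℕ) (p q : ℝ) (ψ : ℝ → ℝ) (r : ℝ) : ℝ :=
  ((p - 1) / p + 1 / (q + 1)) * ψ r ^ (n - 1) -
    ((n : ℝ) - 1) * (deriv ψ r / ψ r) * ∫ s in (0:ℝ)..r, ψ s ^ (n - 1)

/-- Condition (a): `r^γ ψ'(r)/ψ(r) → ℓ ∈ (0,∞)` for some `γ ∈ [0,1)`. -/
def CondA (ψ : ℝ → ℝ) : Prop :=
  ∃ γ ℓ : ℝ, 0 ≤ γ ∧ γ < 1 ∧ 0 < ℓ ∧
    Tendsto (fun r : ℝ => r ^ γ * deriv ψ r / ψ r) atTop (nhds ℓ)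

/-- Condition (b): `ψ'/ψ → +∞` and `(ψ/ψ') (log(ψ'/ψ))' → 0`. -/
def CondB (ψ : ℝ → ℝ) : Prop :=
  Tendsto (fun r : ℝ => deriv ψ r / ψ r) atTop atTop ∧
    Tendsto (fun r : ℝ => ψ r / deriv ψ r *
      deriv (fun s : ℝ => Real.log (deriv ψ s / ψ s)) r) atTop (nhds 0)

/-- energy monotonicity and boundedness. -/
theorem statement_0 (n : ℕ) (hn : 2 ≤ n) (p q : ℝ) (hp1 : 1 < p) (hpn : p < n)
    (hq : (n : ℝ) * p / ((n : ℝ) - p) - 1 ≤ q)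
    (ψ : ℝ → ℝ) (hψ : IsCHModel ψ)
    (T : ℝ≥0∞) (hT : 0 < T) (α : ℝ) (hα : 0 < α)
    (u : ℝ → ℝ) (hu : IsRadialSolution n p q ψ T α u) :
    (∀ r : ℝ, 0 < r → ENNReal.ofReal r < T →
        HasDerivAt (energyF p q u)
          (-(((n : ℝ) - 1) * (deriv ψ r / ψ r) * |deriv u r| ^ p)) r ∧
        -(((n : ℝ) - 1) * (deriv ψ r / ψ r) * |deriv u r| ^ p) ≤ 0) ∧
      (∀ r : ℝ, 0 ≤ r → ENNReal.ofReal r < T →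
        energyF p q u r ≤ α ^ (q + 1) / (q + 1)) ∧
      ∃ M : ℝ, ∀ r : ℝ, 0 ≤ r → ENNReal.ofReal r < T →
        |u r| ≤ M ∧ |deriv u r| ≤ M := by
  obtain ⟨hsm, hψ0, hdψ0, hconv, hψpos⟩ := hψ
  have hp0 : (0:ℝ) < p := by linarith
  have hp1' : (0:ℝ) < p - 1 := by linarith
  have hn2 : (2:ℝ) ≤ (n:ℝ) := by exact_mod_cast hn
  have hnp : (0:ℝ) < (n:ℝ) - p := by linarith
  have hq0 : (0:ℝ) < q + 1 := by
    have h1 : 0 < (n:ℝ) * p / ((n:ℝ) - p) := by positivity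
    linarith
  have hsm' : ContDiff ℝ (⊤ : ℕ∞) ψ := hsm.of_le (by simp)
  have hdiffψ : Differentiable ℝ ψ := hsm'.differentiable (by simp)
  have hdiffψ' : Differentiable ℝ (deriv ψ) :=
    ((contDiff_infty_iff_deriv.mp hsm').2).differentiable (by simp)
  have hψ'mono : MonotoneOn (deriv ψ) (Set.Ici 0) := by
    apply monotoneOn_of_deriv_nonneg (convex_Ici 0) hdiffψ'.continuous.continuousOn
      hdiffψ'.differentiableOn
    intro x hx
    rw [interior_Ici] at hx
    exact hconv x (le_of_lt hx)
  have hψ'pos : ∀ r : ℝ, 0 ≤ r → (0:ℝ) < deriv ψ r := by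
    intro r hr
    have := hψ'mono (Set.mem_Ici.mpr le_rfl) (Set.mem_Ici.mpr hr) hr
    rw [hdψ0] at this; linarith
  set a : ℝ := p / (p - 1) with hadef
  have ha : 1 < a := (one_lt_div hp1').mpr (by linarith)
  set v : ℝ → ℝ := fun s => |deriv u s| ^ (p - 2) * deriv u s with hvdef
  have hvs : ∀ s : ℝ, v s = |deriv u s| ^ (p - 2) * deriv u s := fun s => rfl
  have habs : ∀ x : ℝ, |(|x| ^ (p - 2) * x)| = |x| ^ (p - 1) := by
    intro x
    rcases eq_or_ne x 0 with h | h
    · simp [h, Real.zero_rpow hp1'.ne']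
    · rw [abs_mul, abs_of_nonneg (Real.rpow_nonneg (abs_nonneg x) _),
        ← Real.rpow_add_one (abs_ne_zero.mpr h)]
      congr 1; ring
  have hvabs : ∀ s : ℝ, |v s| ^ a = |deriv u s| ^ p := by
    intro s
    rw [hvs, habs, ← Real.rpow_mul (abs_nonneg _)]
    congr 1
    rw [hadef]
    field_simp
  have henergy : energyF p q u = fun s => (p - 1) / p * |v s| ^ a + u s ^ (q + 1) / (q + 1) := by
    funext s
    rw [energyF, hvabs s]
  -- main derivative computation
  have key : ∀ r : ℝ, 0 < r → ENNReal.ofReal r < T →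
      HasDerivAt (energyF p q u)
        (-(((n : ℝ) - 1) * (deriv ψ r / ψ r) * |deriv u r| ^ p)) r := by
    intro r hr hrT
    have hψr : 0 < ψ r := hψpos r hr
    have hΦ : HasDerivAt (fun s => ψ s ^ (n - 1))
        (((n - 1 : ℕ) : ℝ) * ψ r ^ (n - 1 - 1) * deriv ψ r) r :=
      ((hdiffψ r).hasDerivAt).pow (n - 1)
    have hw := hu.eqn r hr hrT
    have hwformula : (fun s => ψ s ^ (n - 1) * |deriv u s| ^ (p - 2) * deriv u s)
        = fun s => ψ s ^ (n - 1) * v s := by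
      funext s; rw [hvdef]; ring
    rw [hwformula] at hw
    have hΦne : ψ r ^ (n - 1) ≠ 0 := pow_ne_zero _ hψr.ne'
    have hdiv := hw.div hΦ hΦne
    have hveq : (fun s => (ψ s ^ (n - 1) * v s) / ψ s ^ (n - 1)) =ᶠ[𝓝 r] v := by
      filter_upwards [Ioi_mem_nhds hr] with s hs
      have hs' : ψ s ^ (n - 1) ≠ 0 := pow_ne_zero _ (hψpos s hs).ne'
      field_simp
    have hv : HasDerivAt v
        (-(u r ^ q) - ((n:ℝ) - 1) * (deriv ψ r / ψ r) * v r) r := by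
      have h := hdiv.congr_of_eventuallyEq hveq.symm
      refine h.congr_deriv ?_
      obtain ⟨k, rfl⟩ : ∃ k, n = k + 2 := ⟨n - 2, by omega⟩
      push_cast
      field_simp
      ring
    have hg := hasDerivAt_abs_rpow (v r) ha
    have h1 : HasDerivAt (fun s => |v s| ^ a)
        (a * |v r| ^ (a - 2) * v r * (-(u r ^ q) - ((n:ℝ) - 1) * (deriv ψ r / ψ r) * v r)) r :=
      hg.comp r hv
    have hupos := hu.pos r hr.le hrT
    have hud := hu.diff r hr.le hrT
    have h2 : HasDerivAt (fun s => u s ^ (q + 1)) ((q + 1) * u r ^ q * deriv u r) r := by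
      have h := (Real.hasDerivAt_rpow_const (p := q + 1) (x := u r)
        (Or.inl hupos.ne')).comp r hud.hasDerivAt
      simpa [show q + 1 - 1 = q by ring, mul_assoc, Function.comp_def] using h
    have hF : HasDerivAt (energyF p q u)
        ((p - 1) / p * (a * |v r| ^ (a - 2) * v r *
          (-(u r ^ q) - ((n:ℝ) - 1) * (deriv ψ r / ψ r) * v r)) +
          (q + 1) * u r ^ q * deriv u r / (q + 1)) r := by
      rw [henergy]
      exact (h1.const_mul ((p - 1) / p)).add (h2.div_const (q + 1))
    have hE1 : |v r| ^ (a - 2) * v r = deriv u r := by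
      rcases eq_or_ne (deriv u r) 0 with h | h
      · simp [hvdef, h]
      · have hx : (0:ℝ) < |deriv u r| := abs_pos.mpr h
        rw [hvs, habs, ← Real.rpow_mul (abs_nonneg _), ← mul_assoc,
          ← Real.rpow_add hx]
        have he : (p - 1) * (a - 2) + (p - 2) = 0 := by
          rw [hadef]; field_simp; ring
        rw [he, Real.rpow_zero, one_mul]
    have hE3 : deriv u r * v r = |deriv u r| ^ p := by
      rcases eq_or_ne (deriv u r) 0 with h | h
      · simp [hvdef, h, Real.zero_rpow hp0.ne']
      · have hx : (0:ℝ) < |deriv u r| := abs_pos.mpr h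
        rw [hvs]
        have h4 : deriv u r * (|deriv u r| ^ (p - 2) * deriv u r)
            = |deriv u r| ^ (p - 2) * |deriv u r| ^ (2:ℝ) := by
          rw [Real.rpow_two, sq_abs]; ring
        rw [h4, ← Real.rpow_add hx]
        norm_num
    convert hF using 1
    have hE2 : (p - 1) / p * a = 1 := by rw [hadef]; field_simp
    have step1 : (p - 1) / p * (a * |v r| ^ (a - 2) * v r *
        (-(u r ^ q) - ((n:ℝ) - 1) * (deriv ψ r / ψ r) * v r))
        = deriv u r * (-(u r ^ q) - ((n:ℝ) - 1) * (deriv ψ r / ψ r) * v r) := by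
      rw [show (p - 1) / p * (a * |v r| ^ (a - 2) * v r *
        (-(u r ^ q) - ((n:ℝ) - 1) * (deriv ψ r / ψ r) * v r))
        = ((p - 1) / p * a) * ((|v r| ^ (a - 2) * v r) *
        (-(u r ^ q) - ((n:ℝ) - 1) * (deriv ψ r / ψ r) * v r)) by ring, hE2, hE1, one_mul]
    have step2 : (q + 1) * u r ^ q * deriv u r / (q + 1) = u r ^ q * deriv u r := by
      field_simp
    rw [step1, step2, ← hE3]
    ring
  have hnonpos : ∀ x : ℝ, 0 < x →
      -(((n : ℝ) - 1) * (deriv ψ x / ψ x) * |deriv u x| ^ p) ≤ 0 := by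
    intro x hx
    have h1 : (0:ℝ) ≤ (n:ℝ) - 1 := by linarith
    have h2 : 0 ≤ deriv ψ x / ψ x := div_nonneg (hψ'pos x hx.le).le (hψpos x hx).le
    have h3 : 0 ≤ |deriv u x| ^ p := Real.rpow_nonneg (abs_nonneg _) _
    have := mul_nonneg (mul_nonneg h1 h2) h3
    linarith
  -- continuity of the energy
  have hcontu : ContinuousOn u {s : ℝ | 0 ≤ s ∧ ENNReal.ofReal s < T} := fun x hx =>
    ((hu.diff x hx.1 hx.2).continuousAt).continuousWithinAt
  have hcontF : ContinuousOn (energyF p q u) {s : ℝ | 0 ≤ s ∧ ENNReal.ofReal s < T} := by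
    unfold energyF
    apply ContinuousOn.add
    · exact continuousOn_const.mul
        ((hu.deriv_cont.abs).rpow_const (fun x _ => Or.inr hp0.le))
    · exact (hcontu.rpow_const (fun x _ => Or.inr hq0.le)).div_const _
  have hF0 : energyF p q u 0 = α ^ (q + 1) / (q + 1) := by
    rw [energyF, hu.deriv_init, hu.init]
    simp [Real.zero_rpow hp0.ne']
  have hbound : ∀ r : ℝ, 0 ≤ r → ENNReal.ofReal r < T →
      energyF p q u r ≤ α ^ (q + 1) / (q + 1) := by
    intro r hr hrT
    rcases eq_or_lt_of_le hr with h | hrpos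
    · rw [← h, hF0]
    · have hsub : Set.Icc (0:ℝ) r ⊆ {s : ℝ | 0 ≤ s ∧ ENNReal.ofReal s < T} := fun x hx =>
        ⟨hx.1, lt_of_le_of_lt (ENNReal.ofReal_le_ofReal hx.2) hrT⟩
      have hanti : AntitoneOn (energyF p q u) (Set.Icc 0 r) := by
        apply antitoneOn_of_deriv_nonpos (convex_Icc 0 r) (hcontF.mono hsub)
        · intro x hx
          rw [interior_Icc] at hx
          have hxT : ENNReal.ofReal x < T :=
            lt_of_le_of_lt (ENNReal.ofReal_le_ofReal hx.2.le) hrT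
          exact ((key x hx.1 hxT).differentiableAt).differentiableWithinAt
        · intro x hx
          rw [interior_Icc] at hx
          have hxT : ENNReal.ofReal x < T :=
            lt_of_le_of_lt (ENNReal.ofReal_le_ofReal hx.2.le) hrT
          rw [(key x hx.1 hxT).deriv]
          exact hnonpos x hx.1
      have := hanti (Set.mem_Icc.mpr ⟨le_rfl, hr⟩) (Set.mem_Icc.mpr ⟨hr, le_rfl⟩) hr
      rw [hF0] at this
      exact this
  refine ⟨fun r hr hrT => ⟨key r hr hrT, hnonpos r hr⟩, hbound, ?_⟩
  -- boundedness
  set C : ℝ := α ^ (q + 1) / (q + 1) with hCdef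
  have hC0 : 0 ≤ C := div_nonneg (Real.rpow_nonneg hα.le _) hq0.le
  set D : ℝ := p / (p - 1) * C with hDdef
  have hD0 : 0 ≤ D := mul_nonneg (by positivity) hC0
  refine ⟨max α (D ^ (1/p)), fun r hr hrT => ?_⟩
  have hupos := hu.pos r hr hrT
  have hFb := hbound r hr hrT
  have hterm1 : 0 ≤ (p - 1) / p * |deriv u r| ^ p :=
    mul_nonneg (by positivity) (Real.rpow_nonneg (abs_nonneg _) _)
  have hterm2 : 0 ≤ u r ^ (q + 1) / (q + 1) :=
    div_nonneg (Real.rpow_nonneg hupos.le _) hq0.le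
  rw [energyF] at hFb
  constructor
  · have h5 : u r ^ (q + 1) / (q + 1) ≤ α ^ (q + 1) / (q + 1) := by linarith
    have h6 : u r ^ (q + 1) ≤ α ^ (q + 1) := by
      have := (div_le_div_iff_of_pos_right hq0).mp h5
      exact this
    have h7 : u r ≤ α := by
      by_contra h
      push_neg at h
      have := Real.rpow_lt_rpow hα.le h hq0
      linarith
    rw [abs_of_pos hupos]
    exact le_trans h7 (le_max_left _ _)
  · have h5 : (p - 1) / p * |deriv u r| ^ p ≤ C := by rw [hCdef]; linarith
    have h6 : |deriv u r| ^ p ≤ D := by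
      rw [hDdef]
      rw [div_mul_eq_mul_div, le_div_iff₀ hp1']
      calc |deriv u r| ^ p * (p - 1)
          = (p - 1) / p * |deriv u r| ^ p * p := by field_simp
        _ ≤ C * p := by
            apply mul_le_mul_of_nonneg_right h5 hp0.le
        _ = p * C := by ring
    have h7 : (|deriv u r| ^ p) ^ (1/p) ≤ D ^ (1/p) :=
      Real.rpow_le_rpow (Real.rpow_nonneg (abs_nonneg _) _) h6 (by positivity)
    rw [← Real.rpow_mul (abs_nonneg _), mul_one_div, div_self hp0.ne',
      Real.rpow_one] at h7
    exact le_trans h7 (le_max_right _ _)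
end

section
/- Let ψ be a Cartan–Hadamard model function, let T ∈ (0,∞], and let u be a radial solution on [0,T) with initial datum α > 0. Then the Pohozaev function P_u is differentiable on (0,T) with P_u′(r) = K(r)·|u′(r)|^p for every r ∈ (0,T), where K(r) := ((p−1)/p + 1/(q+1))·ψ(r)^{n−1} − (n−1)·(ψ′(r)/ψ(r))·∫₀ʳ ψ(s)^{n−1} ds. Moreover K(r) ≤ 0 for every r > 0, and consequently P_u(r) ≤ 0 for every r ∈ [0,T). -/
open Real Filter MeasureTheory
open scoped ENNReal Topology

lemma aux_abs_mul (p : ℝ) (hp : 1 < p) (x : ℝ) :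
    abs (|x| ^ (p - 2) * x) = |x| ^ (p - 1) := by
  rcases eq_or_ne x 0 with h | h
  · simp [h, Real.zero_rpow (by intro hh; linarith : p - 1 ≠ 0)]
  · have hx : (0:ℝ) < |x| := abs_pos.mpr h
    rw [abs_mul, abs_of_nonneg (Real.rpow_nonneg (abs_nonneg x) _),
      ← Real.rpow_add_one hx.ne']
    ring_nf

lemma aux_inv (p : ℝ) (hp : 1 < p) (x : ℝ) :
    abs (|x| ^ (p - 2) * x) ^ (p / (p - 1) - 2) * (|x| ^ (p - 2) * x) = x := by
  rcases eq_or_ne x 0 with h | h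
  · simp [h]
  · have hx : (0:ℝ) < |x| := abs_pos.mpr h
    have hp1 : p - 1 ≠ 0 := by intro hh; linarith
    rw [aux_abs_mul p hp, ← Real.rpow_mul (abs_nonneg x)]
    have h1 : (p - 1) * (p / (p - 1) - 2) = 2 - p := by field_simp; ring
    rw [h1, ← mul_assoc, ← Real.rpow_add hx]
    norm_num

lemma aux_comp (p : ℝ) (hp : 1 < p) (x : ℝ) :
    |x| ^ p = abs (|x| ^ (p - 2) * x) ^ (p / (p - 1)) := by
  rw [aux_abs_mul p hp, ← Real.rpow_mul (abs_nonneg x)]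
  have hp1 : p - 1 ≠ 0 := by intro hh; linarith
  have h : (p - 1) * (p / (p - 1)) = p := by field_simp
  rw [h]

lemma aux_sq (p : ℝ) (hp : 1 < p) (x : ℝ) :
    |x| ^ (p - 2) * x * x = |x| ^ p := by
  rcases eq_or_ne x 0 with h | h
  · simp [h, Real.zero_rpow (by intro hh; linarith : p ≠ 0)]
  · have hx : (0:ℝ) < |x| := abs_pos.mpr h
    rw [mul_assoc, ← abs_mul_abs_self]
    nth_rewrite 2 [← Real.rpow_one |x|]
    nth_rewrite 3 [← Real.rpow_one |x|]
    rw [← Real.rpow_add hx, ← Real.rpow_add hx]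
    ring_nf

lemma continuous_aux_g (p : ℝ) (hp : 1 < p) :
    Continuous fun x : ℝ => |x| ^ (p - 2) * x := by
  have h1 : Continuous (deriv fun x : ℝ => |x| ^ p) := by
    have h2 : ContDiff ℝ 1 fun x : ℝ => |x| ^ p := by
      have := contDiff_norm_rpow (E := ℝ) hp
      simpa [Real.norm_eq_abs] using this
    exact h2.continuous_deriv le_rfl
  have h3 : (deriv fun x : ℝ => |x| ^ p) = fun x => p * |x| ^ (p - 2) * x := by
    funext x; exact (hasDerivAt_abs_rpow x hp).deriv
  rw [h3] at h1
  have : (fun x : ℝ => |x| ^ (p - 2) * x) = fun x => (p * |x| ^ (p - 2) * x) / p := by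
    funext x; field_simp [show p ≠ 0 by intro hh; linarith]
  rw [this]
  exact h1.div_const p

section Psi
variable {ψ : ℝ → ℝ} (hψ : IsCHModel ψ)

lemma psi_diff (hψ : IsCHModel ψ) : Differentiable ℝ ψ := hψ.1.differentiable (by simp)

lemma psi_deriv_contDiff (hψ : IsCHModel ψ) : ContDiff ℝ 1 (deriv ψ) :=
  ((contDiff_succ_iff_deriv (n := 1)).mp (hψ.1.of_le (by exact WithTop.coe_le_coe.mpr le_top))).2.2

lemma psi_deriv_mono (hψ : IsCHModel ψ) : MonotoneOn (deriv ψ) (Set.Ici 0) := by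
  apply monotoneOn_of_deriv_nonneg (convex_Ici 0)
    ((psi_deriv_contDiff hψ).continuous.continuousOn)
    (((psi_deriv_contDiff hψ).differentiable one_ne_zero).differentiableOn)
  intro x hx
  rw [interior_Ici] at hx
  exact hψ.2.2.2.1 x (le_of_lt hx)

lemma psi_deriv_ge_one (hψ : IsCHModel ψ) {r : ℝ} (hr : 0 ≤ r) : 1 ≤ deriv ψ r := by
  have := psi_deriv_mono hψ (Set.mem_Ici.mpr le_rfl) hr hr
  rwa [hψ.2.2.1] at this

lemma psi_nonneg (hψ : IsCHModel ψ) {r : ℝ} (hr : 0 ≤ r) : 0 ≤ ψ r := by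
  rcases hr.eq_or_lt with h | h
  · rw [← h, hψ.2.1]
  · exact (hψ.2.2.2.2 r h).le

lemma psi_int_nonneg (hψ : IsCHModel ψ) (c : ℕ) {r : ℝ} (hr : 0 ≤ r) :
    0 ≤ ∫ s in (0:ℝ)..r, ψ s ^ c := by
  apply intervalIntegral.integral_nonneg hr
  intro s hs
  exact pow_nonneg (psi_nonneg hψ hs.1) c

lemma psi_key (n : ℕ) (hn : 2 ≤ n) (hψ : IsCHModel ψ) {r : ℝ} (hr : 0 < r) :
    ψ r ^ n ≤ (n : ℝ) * deriv ψ r * ∫ s in (0:ℝ)..r, ψ s ^ (n - 1) := by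
  have hc : Continuous fun s => (n : ℝ) * ψ s ^ (n - 1) * deriv ψ s :=
    (continuous_const.mul ((psi_diff hψ).continuous.pow _)).mul
      (psi_deriv_contDiff hψ).continuous
  have hftc : ∫ s in (0:ℝ)..r, (n : ℝ) * ψ s ^ (n - 1) * deriv ψ s = ψ r ^ n - ψ 0 ^ n := by
    apply intervalIntegral.integral_eq_sub_of_hasDerivAt
    · intro x _
      exact ((psi_diff hψ) x).hasDerivAt.pow n
    · exact hc.intervalIntegrable 0 r
  have h0 : ψ 0 ^ n = 0 := by rw [hψ.2.1]; exact zero_pow (by omega)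
  have hmono : ∫ s in (0:ℝ)..r, (n : ℝ) * ψ s ^ (n - 1) * deriv ψ s ≤
      ∫ s in (0:ℝ)..r, ((n : ℝ) * deriv ψ r) * ψ s ^ (n - 1) := by
    apply intervalIntegral.integral_mono_on hr.le (hc.intervalIntegrable 0 r)
      ((continuous_const.mul ((psi_diff hψ).continuous.pow _)).intervalIntegrable 0 r)
    intro x hx
    have h1 : deriv ψ x ≤ deriv ψ r := psi_deriv_mono hψ hx.1 hr.le hx.2
    have h2 : (0:ℝ) ≤ ψ x ^ (n - 1) := pow_nonneg (psi_nonneg hψ hx.1) _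
    have hn0 : (0:ℝ) ≤ (n:ℝ) := Nat.cast_nonneg n
    show (n : ℝ) * ψ x ^ (n - 1) * deriv ψ x ≤ ((n : ℝ) * deriv ψ r) * ψ x ^ (n - 1)
    nlinarith [mul_le_mul_of_nonneg_left h1 (mul_nonneg hn0 h2)]
  rw [intervalIntegral.integral_const_mul] at hmono
  calc ψ r ^ n = ψ r ^ n - ψ 0 ^ n := by rw [h0]; ring
    _ = ∫ s in (0:ℝ)..r, (n : ℝ) * ψ s ^ (n - 1) * deriv ψ s := hftc.symm
    _ ≤ _ := by linarith

lemma K_nonpos (n : ℕ) (hn : 2 ≤ n) (p q : ℝ) (hp1 : 1 < p) (hpn : p < n)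
    (hq : (n : ℝ) * p / ((n : ℝ) - p) - 1 ≤ q) (hψ : IsCHModel ψ) {r : ℝ} (hr : 0 < r) :
    Kfun n p q ψ r ≤ 0 := by
  have hn1 : (1:ℝ) < n := by
    have : (2:ℝ) ≤ n := by exact_mod_cast hn
    linarith
  have hnp : (0:ℝ) < (n:ℝ) - p := by linarith
  have hp0 : (0:ℝ) < p := by linarith
  have hnpq : (0:ℝ) < (n:ℝ) * p / ((n:ℝ) - p) := by positivity
  have hq1 : (0:ℝ) < q + 1 := by nlinarith
  have hψr : 0 < ψ r := hψ.2.2.2.2 r hr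
  have hψ'r : 1 ≤ deriv ψ r := psi_deriv_ge_one hψ hr.le
  set V := ∫ s in (0:ℝ)..r, ψ s ^ (n - 1) with hV
  have hVn : 0 ≤ V := psi_int_nonneg hψ _ hr.le
  have hkey : ψ r ^ n ≤ (n : ℝ) * deriv ψ r * V := psi_key n hn hψ hr
  -- 1/(q+1) ≤ (n-p)/(n p)
  have hA : (p - 1) / p + 1 / (q + 1) ≤ ((n:ℝ) - 1) / n := by
    have h1 : (n:ℝ) * p / ((n:ℝ) - p) ≤ q + 1 := by linarith
    have h2 : 1 / (q + 1) ≤ ((n:ℝ) - p) / ((n:ℝ) * p) := by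
      rw [div_le_div_iff₀ hq1 (by positivity)]
      have h4 := (div_le_iff₀ hnp).mp h1
      nlinarith
    have h3 : (p - 1) / p + ((n:ℝ) - p) / ((n:ℝ) * p) = ((n:ℝ) - 1) / n := by
      field_simp
      ring
    linarith
  -- ψ^{n-1}/n ≤ (ψ'/ψ) V
  have hB : ψ r ^ (n - 1) / (n:ℝ) ≤ deriv ψ r / ψ r * V := by
    have hpow : ψ r ^ (n - 1) * ψ r = ψ r ^ n := by
      rw [← pow_succ]
      congr 1
      omega
    rw [div_mul_eq_mul_div, div_le_div_iff₀ (by positivity : (0:ℝ) < (n:ℝ)) hψr]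
    nlinarith
  have hpown : (0:ℝ) ≤ ψ r ^ (n - 1) := pow_nonneg hψr.le _
  unfold Kfun
  rw [← hV]
  have hstep1 : ((p - 1) / p + 1 / (q + 1)) * ψ r ^ (n - 1) ≤ (((n:ℝ) - 1) / n) * ψ r ^ (n-1) :=
    mul_le_mul_of_nonneg_right hA hpown
  have hstep2 : (((n:ℝ)-1)/n) * ψ r ^ (n-1) ≤ ((n:ℝ) - 1) * (deriv ψ r / ψ r) * V := by
    have hn1' : (0:ℝ) ≤ (n:ℝ) - 1 := by linarith
    calc (((n:ℝ)-1)/n) * ψ r ^ (n-1) = ((n:ℝ)-1) * (ψ r ^ (n-1) / n) := by ring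
      _ ≤ ((n:ℝ)-1) * (deriv ψ r / ψ r * V) := mul_le_mul_of_nonneg_left hB hn1'
      _ = ((n:ℝ) - 1) * (deriv ψ r / ψ r) * V := by ring
  linarith
end Psi

/-- the Pohozaev function has derivative `K(r)|u'(r)|^p`, `K ≤ 0`,
and consequently `P_u ≤ 0`. -/
theorem statement_1 (n : ℕ) (hn : 2 ≤ n) (p q : ℝ) (hp1 : 1 < p) (hpn : p < n)
    (hq : (n : ℝ) * p / ((n : ℝ) - p) - 1 ≤ q)
    (ψ : ℝ → ℝ) (hψ : IsCHModel ψ)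
    (T : ℝ≥0∞) (hT : 0 < T) (α : ℝ) (hα : 0 < α)
    (u : ℝ → ℝ) (hu : IsRadialSolution n p q ψ T α u) :
    (∀ r : ℝ, 0 < r → ENNReal.ofReal r < T →
        HasDerivAt (pohozaevP n p q ψ u) (Kfun n p q ψ r * |deriv u r| ^ p) r) ∧
      (∀ r : ℝ, 0 < r → Kfun n p q ψ r ≤ 0) ∧
      ∀ r : ℝ, 0 ≤ r → ENNReal.ofReal r < T → pohozaevP n p q ψ u r ≤ 0 := by

  obtain ⟨hψ1, hψ0, hψ'0, hψcc, hψpos⟩ := hψ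
  have hψ' : IsCHModel ψ := ⟨hψ1, hψ0, hψ'0, hψcc, hψpos⟩
  have hψdiff : Differentiable ℝ ψ := psi_diff hψ'
  have hψcont : Continuous ψ := hψdiff.continuous
  have hp0 : (0:ℝ) < p := by linarith
  have hpm1 : p - 1 ≠ 0 := by intro hh; linarith
  have hn1 : (1:ℝ) < n := by
    have : (2:ℝ) ≤ n := by exact_mod_cast hn
    linarith
  have hnp : (0:ℝ) < (n:ℝ) - p := by linarith
  have hq1 : (0:ℝ) < q + 1 := by
    have hnpq : (0:ℝ) < (n:ℝ) * p / ((n:ℝ) - p) := by positivity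
    nlinarith
  have hp' : 1 < p / (p - 1) := by
    rw [lt_div_iff₀ (by linarith : (0:ℝ) < p - 1)]
    linarith
  have hVd : ∀ x : ℝ, HasDerivAt (fun s => ∫ t in (0:ℝ)..s, ψ t ^ (n - 1)) (ψ x ^ (n - 1)) x := by
    intro x
    have hcψ : Continuous fun s => ψ s ^ (n - 1) := hψcont.pow _
    exact intervalIntegral.integral_hasDerivAt_right (hcψ.intervalIntegrable 0 x)
      (hcψ.stronglyMeasurableAtFilter _ _) hcψ.continuousAt
  -- Part 1
  have hder : ∀ r : ℝ, 0 < r → ENNReal.ofReal r < T →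
      HasDerivAt (pohozaevP n p q ψ u) (Kfun n p q ψ r * |deriv u r| ^ p) r := by
    intro r hr hrT
    have hur : 0 < u r := hu.pos r hr.le hrT
    have hψr : 0 < ψ r := hψpos r hr
    have hne : ψ r ^ (n - 1) ≠ 0 := (pow_pos hψr _).ne'
    have hu' : HasDerivAt u (deriv u r) r := (hu.diff r hr.le hrT).hasDerivAt
    have hE : HasDerivAt (fun s => ψ s ^ (n - 1) * |deriv u s| ^ (p - 2) * deriv u s)
        (-(ψ r ^ (n - 1) * u r ^ q)) r := hu.eqn r hr hrT
    have hψpow : HasDerivAt (fun s => ψ s ^ (n - 1))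
        (((n - 1 : ℕ) : ℝ) * ψ r ^ (n - 1 - 1) * deriv ψ r) r :=
      (hψdiff r).hasDerivAt.pow (n - 1)
    have hwq := hE.div hψpow hne
    have hev : (fun s => (ψ s ^ (n - 1) * |deriv u s| ^ (p - 2) * deriv u s) / ψ s ^ (n - 1))
        =ᶠ[𝓝 r] fun s => |deriv u s| ^ (p - 2) * deriv u s := by
      filter_upwards [hψcont.continuousAt.eventually_ne hψr.ne'] with s hs
      rw [mul_assoc, mul_div_cancel_left₀ _ (pow_ne_zero _ hs)]
    have hw : HasDerivAt (fun s => |deriv u s| ^ (p - 2) * deriv u s)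
        (-(u r ^ q) - ((n : ℝ) - 1) * (deriv ψ r / ψ r)
          * (|deriv u r| ^ (p - 2) * deriv u r)) r := by
      have h1 := hwq.congr_of_eventuallyEq hev.symm
      refine HasDerivAt.congr_deriv h1 (Eq.symm ?_)
      obtain ⟨m, rfl⟩ : ∃ m, n = m + 2 := ⟨n - 2, by omega⟩
      have he1 : m + 2 - 1 = m + 1 := rfl
      have he2 : m + 1 - 1 = m := rfl
      rw [he1, he2]
      have hc : ((m + 1 : ℕ) : ℝ) = (m : ℝ) + 1 := by push_cast; ring
      have hc2 : ((m + 2 : ℕ) : ℝ) = (m : ℝ) + 2 := by push_cast; ring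
      rw [hc, hc2]
      field_simp
      ring
    have hcomp := (hasDerivAt_abs_rpow (|deriv u r| ^ (p - 2) * deriv u r) hp').comp r hw
    have habsp : HasDerivAt (fun s => |deriv u s| ^ p)
        (p / (p - 1) * deriv u r *
          (-(u r ^ q) - ((n : ℝ) - 1) * (deriv ψ r / ψ r)
            * (|deriv u r| ^ (p - 2) * deriv u r))) r := by
      have hfun : (fun s => abs (|deriv u s| ^ (p - 2) * deriv u s) ^ (p / (p - 1)))
          = fun s => |deriv u s| ^ p := funext fun s => (aux_comp p hp1 (deriv u s)).symm
      rw [Function.comp_def, hfun] at hcomp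
      refine HasDerivAt.congr_deriv hcomp (Eq.symm ?_)
      conv_rhs => rw [mul_assoc (p / (p - 1)), aux_inv p hp1]
    have hupow : HasDerivAt (fun s => u s ^ (q + 1)) ((q + 1) * u r ^ q * deriv u r) r := by
      have h2 := (Real.hasDerivAt_rpow_const (x := u r) (p := q + 1)
        (Or.inl hur.ne')).comp r hu'
      rw [Function.comp_def] at h2
      refine HasDerivAt.congr_deriv h2 (Eq.symm ?_)
      rw [show q + 1 - 1 = q by ring]
    have hF : HasDerivAt (energyF p q u)
        (deriv u r * (-(u r ^ q) - ((n : ℝ) - 1) * (deriv ψ r / ψ r)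
            * (|deriv u r| ^ (p - 2) * deriv u r)) + u r ^ q * deriv u r) r := by
      have h3 := (habsp.const_mul ((p - 1) / p)).add (hupow.div_const (q + 1))
      have h4 : energyF p q u = fun s => (p - 1) / p * |deriv u s| ^ p
          + u s ^ (q + 1) / (q + 1) := rfl
      rw [h4]
      refine HasDerivAt.congr_deriv h3 (Eq.symm ?_)
      field_simp
    have hEu := (hE.mul hu').div_const (q + 1)
    have hPeq : pohozaevP n p q ψ u = fun s => (∫ t in (0:ℝ)..s, ψ t ^ (n - 1))
        * energyF p q u s
        + (ψ s ^ (n - 1) * |deriv u s| ^ (p - 2) * deriv u s) * u s / (q + 1) := by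
      funext s
      unfold pohozaevP
      ring
    have htot := ((hVd r).mul hF).add hEu
    rw [hPeq]
    refine HasDerivAt.congr_deriv htot (Eq.symm ?_)
    unfold Kfun energyF
    rw [Real.rpow_add_one hur.ne' q]
    linear_combination (-(ψ r ^ (n - 1) / (q + 1)) + ((n:ℝ) - 1) * (deriv ψ r / ψ r)
      * (∫ s in (0:ℝ)..r, ψ s ^ (n - 1))) * aux_sq p hp1 (deriv u r)
  refine ⟨hder, fun r hr => K_nonpos n hn p q hp1 hpn hq hψ' hr, ?_⟩
  -- Part 3
  have hP0 : pohozaevP n p q ψ u 0 = 0 := by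
    unfold pohozaevP
    rw [intervalIntegral.integral_same, hψ0, zero_pow (by omega : n - 1 ≠ 0)]
    simp
  intro r hr hrT
  rcases hr.eq_or_lt with h | h
  · rw [← h, hP0]
  · have hsub : Set.Icc (0:ℝ) r ⊆ {s : ℝ | 0 ≤ s ∧ ENNReal.ofReal s < T} := fun x hx =>
      ⟨hx.1, lt_of_le_of_lt (ENNReal.ofReal_le_ofReal hx.2) hrT⟩
    have hducont := hu.deriv_cont
    have hucont : ContinuousOn u {s : ℝ | 0 ≤ s ∧ ENNReal.ofReal s < T} := fun x hx =>
      ((hu.diff x hx.1 hx.2).continuousAt).continuousWithinAt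
    have habsP : Continuous fun y : ℝ => |y| ^ p :=
      continuous_abs.rpow_const (fun x => Or.inr hp0.le)
    have hVcont : Continuous fun s : ℝ => ∫ t in (0:ℝ)..s, ψ t ^ (n - 1) :=
      continuous_iff_continuousAt.mpr fun x => (hVd x).continuousAt
    have hPcont : ContinuousOn (pohozaevP n p q ψ u)
        {s : ℝ | 0 ≤ s ∧ ENNReal.ofReal s < T} := by
      apply ContinuousOn.add
      · apply hVcont.continuousOn.mul
        apply ContinuousOn.add
        · exact (habsP.comp_continuousOn hducont).const_smul ((p - 1) / p)
        · exact (hucont.rpow_const fun x hx => Or.inr (by linarith)).div_const (q + 1)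
      · apply ContinuousOn.mul
        · exact ((hψcont.pow (n - 1)).continuousOn.div_const (q + 1))
        · exact (((continuous_aux_g p hp1).comp_continuousOn hducont).mul hucont)
    have hanti : AntitoneOn (pohozaevP n p q ψ u) (Set.Icc 0 r) := by
      apply antitoneOn_of_deriv_nonpos (convex_Icc 0 r) (hPcont.mono hsub)
      · intro x hx
        rw [interior_Icc] at hx
        exact (hder x hx.1 (lt_of_le_of_lt (ENNReal.ofReal_le_ofReal hx.2.le)
          hrT)).differentiableAt.differentiableWithinAt
      · intro x hx
        rw [interior_Icc] at hx
        rw [(hder x hx.1 (lt_of_le_of_lt (ENNReal.ofReal_le_ofReal hx.2.le) hrT)).deriv]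
        exact mul_nonpos_of_nonpos_of_nonneg (K_nonpos n hn p q hp1 hpn hq hψ' hx.1)
          (Real.rpow_nonneg (abs_nonneg _) p)
    calc pohozaevP n p q ψ u r ≤ pohozaevP n p q ψ u 0 :=
          hanti (Set.left_mem_Icc.mpr hr) (Set.right_mem_Icc.mpr hr) hr
      _ = 0 := hP0
end

section
/- Let ψ be a Cartan–Hadamard model function and define K(r) := ((p−1)/p + 1/(q+1))·ψ(r)^{n−1} − (n−1)·(ψ′(r)/ψ(r))·∫₀ʳ ψ(s)^{n−1} ds for r > 0. Then for every r > 0 one has K(r) = 0 if and only if q = np/(n−p) − 1 and ψ″(s) = 0 for every s ∈ (0,r). -/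
open Real Filter MeasureTheory
open scoped ENNReal Topology

lemma crit_iff {n : ℕ} {p q : ℝ} (hn : 2 ≤ n) (hp1 : 1 < p) (hpn : p < (n : ℝ))
    (hq : (n : ℝ) * p / ((n : ℝ) - p) - 1 ≤ q) :
    ((p - 1) / p + 1 / (q + 1) - ((n : ℝ) - 1) / n = 0) ↔
      q = (n : ℝ) * p / ((n : ℝ) - p) - 1 := by
  have hp0 : (0:ℝ) < p := by linarith
  have hn0 : (0:ℝ) < (n:ℝ) := by positivity
  have hnp : (0:ℝ) < (n:ℝ) - p := by linarith
  have hq1 : (0:ℝ) < q + 1 := by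
    have : (0:ℝ) < (n : ℝ) * p / ((n : ℝ) - p) := by positivity
    linarith
  constructor
  · intro h
    have h1 : 1 / (q + 1) = ((n:ℝ) - p) / ((n:ℝ) * p) := by
      field_simp at h ⊢
      nlinarith [h]
    have : q + 1 = (n:ℝ) * p / ((n:ℝ) - p) := by
      field_simp at h1 ⊢
      nlinarith [h1]
    linarith
  · intro h
    have hq1' : q + 1 = (n:ℝ) * p / ((n:ℝ) - p) := by rw [h]; ring
    rw [sub_eq_zero, hq1']
    field_simp
    ring

/-- characterization of the vanishing of `K`. -/
theorem statement_2 (n : ℕ) (hn : 2 ≤ n) (p q : ℝ) (hp1 : 1 < p) (hpn : p < n)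
    (hq : (n : ℝ) * p / ((n : ℝ) - p) - 1 ≤ q)
    (ψ : ℝ → ℝ) (hψ : IsCHModel ψ) :
    ∀ r : ℝ, 0 < r →
      (Kfun n p q ψ r = 0 ↔
        q = (n : ℝ) * p / ((n : ℝ) - p) - 1 ∧
          ∀ s : ℝ, 0 < s → s < r → deriv (deriv ψ) s = 0) := by
  obtain ⟨hsm, hψ0, hψ'0, hconv, hpos⟩ := hψ
  have hp0 : (0:ℝ) < p := by linarith
  have hn0 : (0:ℝ) < (n:ℝ) := by positivity
  have hnR : (0:ℝ) < (n:ℝ) - 1 := by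
    have : (2:ℝ) ≤ (n:ℝ) := by exact_mod_cast hn
    linarith
  have hnp : (0:ℝ) < (n:ℝ) - p := by linarith
  have hq1 : (0:ℝ) < q + 1 := by
    have : (0:ℝ) < (n : ℝ) * p / ((n : ℝ) - p) := by positivity
    linarith
  have hψnn : ∀ x : ℝ, 0 ≤ x → 0 ≤ ψ x := by
    intro x hx
    rcases eq_or_lt_of_le hx with h | h
    · simp [← h, hψ0]
    · exact (hpos x h).le
  have hdiff : Differentiable ℝ ψ := hsm.differentiable (by simp)
  have hsmi : ContDiff ℝ ((⊤ : ℕ∞) : WithTop ℕ∞) ψ := hsm.of_le (by simp)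
  have hsm' : ContDiff ℝ ((⊤ : ℕ∞) : WithTop ℕ∞) (deriv ψ) := (contDiff_infty_iff_deriv.mp hsmi).2
  have hdiff' : Differentiable ℝ (deriv ψ) := hsm'.differentiable (by simp)
  have hcontI : Continuous fun s : ℝ => ψ s ^ (n - 1) := by
    exact (hsm.continuous).pow _
  set I : ℝ → ℝ := fun t => ∫ s in (0:ℝ)..t, ψ s ^ (n - 1) with hI
  set G : ℝ → ℝ := fun t => ψ t ^ n / n - deriv ψ t * I t with hGdef
  have hIderiv : ∀ t : ℝ, HasDerivAt I (ψ t ^ (n - 1)) t := fun t =>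
    (hcontI.integral_hasStrictDerivAt 0 t).hasDerivAt
  have hIdiff : Differentiable ℝ I := fun t => (hIderiv t).differentiableAt
  have hInn : ∀ t : ℝ, 0 ≤ t → 0 ≤ I t := fun t ht =>
    intervalIntegral.integral_nonneg ht (fun x hx => pow_nonneg (hψnn x hx.1) _)
  have hIpos : ∀ t : ℝ, 0 < t → 0 < I t := by
    intro t ht
    exact intervalIntegral.intervalIntegral_pos_of_pos_on
      (hcontI.intervalIntegrable _ _)
      (fun x hx => pow_pos (hpos x hx.1) _) ht
  have hGderiv : ∀ t : ℝ, HasDerivAt G (-(deriv (deriv ψ) t * I t)) t := by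
    intro t
    have h1 : HasDerivAt (fun s => ψ s ^ n) ((n : ℝ) * ψ t ^ (n - 1) * deriv ψ t) t :=
      (hdiff t).hasDerivAt.pow n
    have h3 : HasDerivAt (deriv ψ) (deriv (deriv ψ) t) t := (hdiff' t).hasDerivAt
    have h4 := (h1.div_const (n : ℝ)).sub (h3.mul (hIderiv t))
    refine h4.congr_deriv ?_
    have hn0' : (n : ℝ) ≠ 0 := ne_of_gt hn0
    field_simp
    ring
  have hGdiff : Differentiable ℝ G := fun t => (hGderiv t).differentiableAt
  have hGd : ∀ t : ℝ, deriv G t = -(deriv (deriv ψ) t * I t) := fun t => (hGderiv t).deriv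
  have hG0 : G 0 = 0 := by
    simp [hGdef, hI, hψ0, intervalIntegral.integral_same, zero_pow (by omega : n ≠ 0)]
  have hGanti : AntitoneOn G (Set.Ici (0:ℝ)) := by
    apply antitoneOn_of_deriv_nonpos (convex_Ici 0) hGdiff.continuous.continuousOn
      (hGdiff.differentiableOn)
    intro x hx
    rw [interior_Ici] at hx
    rw [hGd x]
    have := hconv x (le_of_lt hx)
    have := hInn x (le_of_lt hx)
    nlinarith
  intro r hr
  have hψr : 0 < ψ r := hpos r hr
  have hψrne : ψ r ≠ 0 := ne_of_gt hψr
  set A : ℝ := (p - 1) / p + 1 / (q + 1) - ((n : ℝ) - 1) / n with hA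
  have hpow : ψ r ^ (n - 1) * ψ r = ψ r ^ n := by
    rw [← pow_succ, Nat.sub_add_cancel (by omega)]
  have hkey : Kfun n p q ψ r * ψ r = A * ψ r ^ n + ((n:ℝ) - 1) * G r := by
    have e1 : Kfun n p q ψ r * ψ r =
        ((p - 1) / p + 1 / (q + 1)) * (ψ r ^ (n - 1) * ψ r) -
          ((n : ℝ) - 1) * deriv ψ r * I r := by
      rw [Kfun]
      field_simp
      ring
    rw [e1, hpow, hGdef]
    have hn0' : (n : ℝ) ≠ 0 := ne_of_gt hn0
    have hc : (p - 1) / p + 1 / (q + 1) = A + ((n:ℝ) - 1) / n := by rw [hA]; ring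
    rw [hc]
    field_simp
    ring
  have hAle : A ≤ 0 := by
    have h1 : 1 / (q + 1) ≤ ((n:ℝ) - p) / ((n:ℝ) * p) := by
      have hcp : (0:ℝ) < (n:ℝ) * p / ((n:ℝ) - p) := by positivity
      have := one_div_le_one_div_of_le hcp (by linarith : (n:ℝ) * p / ((n:ℝ) - p) ≤ q + 1)
      rwa [one_div_div] at this
    have h2 : (p - 1) / p + ((n:ℝ) - p) / ((n:ℝ) * p) - ((n:ℝ) - 1) / n = 0 := by
      field_simp
      ring
    rw [hA]; linarith
  have hGr_le : G r ≤ 0 := by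
    have := hGanti (Set.self_mem_Ici) (Set.mem_Ici.mpr hr.le) hr.le
    rwa [hG0] at this
  constructor
  · intro hK
    have hsum : A * ψ r ^ n + ((n:ℝ) - 1) * G r = 0 := by
      rw [← hkey, hK, zero_mul]
    have hψn : 0 < ψ r ^ n := pow_pos hψr _
    have t1 : A * ψ r ^ n ≤ 0 := mul_nonpos_of_nonpos_of_nonneg hAle hψn.le
    have t2 : ((n:ℝ) - 1) * G r ≤ 0 := mul_nonpos_of_nonneg_of_nonpos hnR.le hGr_le
    have hA0 : A * ψ r ^ n = 0 := by linarith
    have hG0' : ((n:ℝ) - 1) * G r = 0 := by linarith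
    have hAzero : A = 0 := by
      rcases mul_eq_zero.mp hA0 with h | h
      · exact h
      · exact absurd h (ne_of_gt hψn)
    have hGr : G r = 0 := by
      rcases mul_eq_zero.mp hG0' with h | h
      · exact absurd h (ne_of_gt hnR)
      · exact h
    refine ⟨(crit_iff hn hp1 hpn hq).mp hAzero, ?_⟩
    intro s hs hsr
    have hGzero : ∀ t ∈ Set.Ioo (0:ℝ) r, G t = 0 := by
      intro t ht
      have h1 : G t ≤ 0 := by
        have := hGanti Set.self_mem_Ici (Set.mem_Ici.mpr ht.1.le) ht.1.le
        rwa [hG0] at this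
      have h2 : 0 ≤ G t := by
        have := hGanti (Set.mem_Ici.mpr ht.1.le) (Set.mem_Ici.mpr hr.le) ht.2.le
        rw [hGr] at this
        linarith
      linarith
    have hmem : Set.Ioo (0:ℝ) r ∈ 𝓝 s := Ioo_mem_nhds hs hsr
    have heq : G =ᶠ[𝓝 s] fun _ => (0:ℝ) :=
      Filter.eventuallyEq_of_mem hmem hGzero
    have hz : HasDerivAt G 0 s :=
      (hasDerivAt_const s (0:ℝ)).congr_of_eventuallyEq heq
    have := (hGderiv s).unique hz
    have hIs : 0 < I s := hIpos s hs
    have : deriv (deriv ψ) s * I s = 0 := by linarith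
    rcases mul_eq_zero.mp this with h | h
    · exact h
    · exact absurd h (ne_of_gt hIs)
  · rintro ⟨hqc, hψ''⟩
    have hAzero : A = 0 := (crit_iff hn hp1 hpn hq).mpr hqc
    have hGr : G r = 0 := by
      have hd0 : ∀ x ∈ interior (Set.Icc (0:ℝ) r), deriv G x = 0 := by
        intro x hx
        rw [interior_Icc] at hx
        rw [hGd x, hψ'' x hx.1 hx.2, zero_mul, neg_zero]
      have hmono : MonotoneOn G (Set.Icc (0:ℝ) r) := by
        apply monotoneOn_of_deriv_nonneg (convex_Icc 0 r) hGdiff.continuous.continuousOn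
          hGdiff.differentiableOn
        intro x hx; rw [hd0 x hx]
      have hanti : AntitoneOn G (Set.Icc (0:ℝ) r) := by
        apply antitoneOn_of_deriv_nonpos (convex_Icc 0 r) hGdiff.continuous.continuousOn
          hGdiff.differentiableOn
        intro x hx; rw [hd0 x hx]
      have h1 := hmono (Set.left_mem_Icc.mpr hr.le) (Set.right_mem_Icc.mpr hr.le) hr.le
      have h2 := hanti (Set.left_mem_Icc.mpr hr.le) (Set.right_mem_Icc.mpr hr.le) hr.le
      rw [hG0] at h1 h2
      linarith
    have : Kfun n p q ψ r * ψ r = 0 := by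
      rw [hkey, hAzero, hGr]; ring
    rcases mul_eq_zero.mp this with h | h
    · exact h
    · exact absurd h hψrne
end

section
/- Let ψ be a Cartan–Hadamard model function and u a global radial solution with initial datum α > 0. Then u(r) converges as r → +∞ to some limit λ ∈ [0, α), and u′(r) → 0 as r → +∞. -/
open Real Filter MeasureTheory
open scoped ENNReal Topology

/-- `u(r) → λ ∈ [0, α)` and `u'(r) → 0` as `r → ∞`. -/
theorem statement_4 (n : ℕ) (hn : 2 ≤ n) (p q : ℝ) (hp1 : 1 < p) (hpn : p < n)
    (hq : (n : ℝ) * p / ((n : ℝ) - p) - 1 ≤ q)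
    (ψ : ℝ → ℝ) (hψ : IsCHModel ψ) (α : ℝ) (hα : 0 < α)
    (u : ℝ → ℝ) (hu : IsRadialSolution n p q ψ ⊤ α u) :
    ∃ lam : ℝ, 0 ≤ lam ∧ lam < α ∧ Tendsto u atTop (nhds lam) ∧
      Tendsto (deriv u) atTop (nhds 0) := by
  obtain ⟨m, rfl⟩ : ∃ m, n = m + 2 := ⟨n - 2, by omega⟩
  set n := m + 2 with hn2
  obtain ⟨hψs, hψ0, hψ'0, hψ'', hψpos⟩ := hψ
  have hT : ∀ r : ℝ, ENNReal.ofReal r < ⊤ := fun r => ENNReal.ofReal_lt_top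
  have hp0 : (0:ℝ) < p := lt_trans one_pos hp1
  have hp1' : (0:ℝ) < p - 1 := by linarith
  have hnR : (2:ℝ) ≤ (n:ℝ) := by exact_mod_cast hn
  have hq1 : (0:ℝ) < q + 1 := by
    have hnp : (0:ℝ) < (n:ℝ) - p := by linarith
    have h1 : (1:ℝ) < (n:ℝ) * p / ((n:ℝ) - p) := by
      rw [lt_div_iff₀ hnp]; nlinarith
    linarith
  -- facts about ψ
  have hψdiff : Differentiable ℝ ψ := hψs.differentiable (by simp)
  have hψs' : ContDiff ℝ ((⊤ : ℕ∞) : WithTop ℕ∞) ψ := hψs.of_le (by simp)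
  have hψ'cd : ContDiff ℝ ((⊤ : ℕ∞) : WithTop ℕ∞) (deriv ψ) :=
    (contDiff_infty_iff_deriv.mp hψs').2
  have hψ'diff : Differentiable ℝ (deriv ψ) := hψ'cd.differentiable (by simp)
  have hψ'mono : MonotoneOn (deriv ψ) (Set.Ici 0) := by
    apply monotoneOn_of_deriv_nonneg (convex_Ici 0) hψ'cd.continuous.continuousOn
      (fun x _ => (hψ'diff x).differentiableWithinAt)
    intro x hx
    rw [interior_Ici] at hx
    exact hψ'' x hx.le
  have hψ'ge1 : ∀ r : ℝ, 0 ≤ r → 1 ≤ deriv ψ r := by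
    intro r hr
    have h := hψ'mono Set.self_mem_Ici (Set.mem_Ici.mpr hr) hr
    rwa [hψ'0] at h
  have hψpow : ∀ r : ℝ, 0 < r → 0 < ψ r ^ (n - 1) := fun r hr => pow_pos (hψpos r hr) _
  -- facts about u
  have hupos : ∀ r : ℝ, 0 ≤ r → 0 < u r := fun r hr => hu.pos r hr (hT r)
  have hudiff : ∀ r : ℝ, 0 ≤ r → DifferentiableAt ℝ u r := fun r hr => hu.diff r hr (hT r)
  have hDcont : ContinuousOn (deriv u) (Set.Ici 0) := by
    have h := hu.deriv_cont
    have hs : {r : ℝ | 0 ≤ r ∧ ENNReal.ofReal r < ⊤} = Set.Ici 0 := by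
      ext r; simp [ENNReal.ofReal_lt_top]
    rwa [hs] at h
  set w : ℝ → ℝ := fun s => ψ s ^ (n - 1) * |deriv u s| ^ (p - 2) * deriv u s with hw
  have heqn : ∀ r : ℝ, 0 < r → HasDerivAt w (-(ψ r ^ (n - 1) * u r ^ q)) r :=
    fun r hr => hu.eqn r hr (hT r)
  have habs_vv : ∀ r : ℝ, |(|deriv u r| ^ (p - 2) * deriv u r)| = |deriv u r| ^ (p - 1) := by
    intro r
    rcases eq_or_ne (deriv u r) 0 with h | h
    · simp [h, Real.zero_rpow (show p - 1 ≠ 0 by linarith)]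
    · have hx : 0 < |deriv u r| := abs_pos.mpr h
      rw [abs_mul, abs_of_nonneg (Real.rpow_nonneg (abs_nonneg _) _)]
      have h2 : |deriv u r| ^ (p - 2) * |deriv u r| = |deriv u r| ^ (p - 2 + 1) :=
        (Real.rpow_add_one hx.ne' (p - 2)).symm
      rw [h2, show p - 2 + 1 = p - 1 by ring]
  set vv : ℝ → ℝ := fun s => |deriv u s| ^ (p - 2) * deriv u s with hvv
  -- w tends to 0 from the right at 0
  have hwlim : Tendsto w (nhdsWithin 0 (Set.Ioi 0)) (nhds 0) := by
    have hbound : ∀ᶠ r in nhdsWithin 0 (Set.Ioi 0),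
        ‖w r‖ ≤ ψ r ^ (n - 1) * |deriv u r| ^ (p - 1) := by
      filter_upwards [self_mem_nhdsWithin] with r hr
      have hr0 : (0:ℝ) < r := hr
      have : ‖w r‖ = ψ r ^ (n - 1) * |deriv u r| ^ (p - 1) := by
        rw [Real.norm_eq_abs, hw]
        simp only []
        rw [mul_assoc, abs_mul, abs_of_nonneg (hψpow r hr0).le, habs_vv]
      rw [this]
    refine squeeze_zero_norm' hbound ?_
    · have h1 : Tendsto (fun r => ψ r ^ (n - 1)) (nhdsWithin 0 (Set.Ioi 0)) (nhds 0) := by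
        have hc : Continuous fun r => ψ r ^ (n - 1) := hψdiff.continuous.pow _
        have h : Tendsto (fun r => ψ r ^ (n - 1)) (nhdsWithin 0 (Set.Ioi 0))
            (nhds (ψ 0 ^ (n - 1))) := (hc.tendsto 0).mono_left nhdsWithin_le_nhds
        simpa [hψ0, zero_pow (show n - 1 ≠ 0 by omega)] using h
      have h2 : Tendsto (fun r => |deriv u r| ^ (p - 1)) (nhdsWithin 0 (Set.Ioi 0)) (nhds 0) := by
        have hD0 : Tendsto (fun r => |deriv u r|) (nhdsWithin 0 (Set.Ioi 0)) (nhds 0) := by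
          have hc := (hDcont 0 Set.self_mem_Ici).tendsto
          rw [hu.deriv_init] at hc
          have habs := hc.abs
          simpa using habs.mono_left (nhdsWithin_mono 0 Set.Ioi_subset_Ici_self)
        have hcont : ContinuousAt (fun x : ℝ => x ^ (p - 1)) 0 :=
          Real.continuousAt_rpow_const 0 (p - 1) (Or.inr (by linarith))
        have h := hcont.tendsto.comp hD0
        simpa [Function.comp_def, Real.zero_rpow (show p - 1 ≠ 0 by linarith)] using h
      simpa using h1.mul h2
  have hwcont : ContinuousOn w (Set.Ioi 0) :=
    fun r hr => (heqn r hr).continuousAt.continuousWithinAt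
  have hwanti : StrictAntiOn w (Set.Ioi 0) := by
    apply strictAntiOn_of_deriv_neg (convex_Ioi 0) hwcont
    intro r hr
    rw [interior_Ioi] at hr
    rw [(heqn r hr).deriv]
    have h := mul_pos (hψpow r hr) (Real.rpow_pos_of_pos (hupos r hr.le) q)
    linarith
  have hwle : ∀ r : ℝ, 0 < r → w r ≤ 0 := by
    intro r hr
    refine ge_of_tendsto hwlim ?_
    filter_upwards [Ioo_mem_nhdsGT hr] with ε hε
    exact (hwanti hε.1 (Set.mem_Ioi.mpr hr) hε.2).le
  have hwneg : ∀ r : ℝ, 0 < r → w r < 0 := fun r hr =>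
    lt_of_lt_of_le
      (hwanti (Set.mem_Ioi.mpr (half_pos hr)) (Set.mem_Ioi.mpr hr) (half_lt_self hr))
      (hwle _ (half_pos hr))
  have hDneg : ∀ r : ℝ, 0 < r → deriv u r < 0 := by
    intro r hr
    by_contra h
    push_neg at h
    have h1 : 0 ≤ |deriv u r| ^ (p - 2) * deriv u r :=
      mul_nonneg (Real.rpow_nonneg (abs_nonneg _) _) h
    have h2 : 0 ≤ w r := by
      rw [hw]; simp only []
      rw [mul_assoc]
      exact mul_nonneg (hψpow r hr).le h1
    exact absurd h2 (not_le.mpr (hwneg r hr))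
  -- u strictly decreasing, converges
  have hustrict : StrictAntiOn u (Set.Ici 0) := by
    apply strictAntiOn_of_deriv_neg (convex_Ici 0)
      (fun r hr => ((hudiff r hr).continuousAt).continuousWithinAt)
    intro r hr
    rw [interior_Ici] at hr
    exact hDneg r hr
  have huanti : AntitoneOn u (Set.Ici 0) := hustrict.antitoneOn
  set lam := ⨅ r : ℝ, u (max r 0) with hlam
  have hv_anti : Antitone fun r : ℝ => u (max r 0) := fun a b hab =>
    huanti (Set.mem_Ici.mpr (le_max_right a 0)) (Set.mem_Ici.mpr (le_max_right b 0))
      (max_le_max hab le_rfl)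
  have hv_bdd : BddBelow (Set.range fun r : ℝ => u (max r 0)) := by
    refine ⟨0, ?_⟩
    rintro x ⟨r, rfl⟩
    exact (hupos _ (le_max_right r 0)).le
  have hulim : Tendsto u atTop (nhds lam) := by
    refine (tendsto_atTop_ciInf hv_anti hv_bdd).congr' ?_
    filter_upwards [eventually_ge_atTop (0:ℝ)] with r hr
    rw [max_eq_left hr]
  have hlam0 : 0 ≤ lam := by
    refine ge_of_tendsto hulim ?_
    filter_upwards [eventually_ge_atTop (0:ℝ)] with r hr
    exact (hupos r hr).le
  have hlamlt : lam < α := by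
    have h1 : lam ≤ u 1 := by
      refine le_of_tendsto hulim ?_
      filter_upwards [eventually_ge_atTop (1:ℝ)] with r hr
      exact huanti (Set.mem_Ici.mpr zero_le_one) (Set.mem_Ici.mpr (by linarith)) hr
    have h2 : u 1 < u 0 := hustrict Set.self_mem_Ici (Set.mem_Ici.mpr zero_le_one) one_pos
    rw [hu.init] at h2
    linarith
  -- vv and its derivative
  have hvvneg : ∀ r : ℝ, 0 < r → vv r < 0 := fun r hr =>
    mul_neg_of_pos_of_neg (Real.rpow_pos_of_pos (abs_pos.mpr (hDneg r hr).ne) _) (hDneg r hr)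
  have hvv_abs : ∀ r : ℝ, 0 < r → -vv r = |deriv u r| ^ (p - 1) := by
    intro r hr
    have h := habs_vv r
    rwa [abs_of_neg (hvvneg r hr)] at h
  have hvv' : ∀ r : ℝ, 0 < r →
      HasDerivAt vv (-(u r ^ q) - ((n:ℝ) - 1) * (deriv ψ r / ψ r) * vv r) r := by
    intro r hr
    have hψr : ψ r ≠ 0 := (hψpos r hr).ne'
    have hψrp : ψ r ^ (n - 1) ≠ 0 := (hψpow r hr).ne'
    have hg : HasDerivAt (fun s => ψ s ^ (n - 1))
        (((n - 1 : ℕ) : ℝ) * ψ r ^ (n - 1 - 1) * deriv ψ r) r :=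
      (hψdiff r).hasDerivAt.pow (n - 1)
    have hdiv := (heqn r hr).div hg hψrp
    have hev : (fun s => w s / ψ s ^ (n - 1)) =ᶠ[nhds r] vv := by
      filter_upwards [isOpen_Ioi.mem_nhds (Set.mem_Ioi.mpr hr)] with s hs
      have hs0 : ψ s ^ (n - 1) ≠ 0 := (hψpow s hs).ne'
      simp only [hw, hvv]
      rw [mul_assoc, mul_div_cancel_left₀ _ hs0]
    have hd2 := hdiv.congr_of_eventuallyEq hev.symm
    refine hd2.congr_deriv ?_
    have hwr : w r = ψ r ^ (n - 1) * vv r := by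
      simp only [hw, hvv]; ring
    rw [hwr]
    simp only [hn2, show m + 2 - 1 = m + 1 from rfl, show m + 2 - 1 - 1 = m from rfl]
    push_cast
    field_simp
    ring
  -- derivative of the energy
  have hF' : ∀ r : ℝ, 0 < r → HasDerivAt (energyF p q u)
      (((n:ℝ) - 1) * (deriv ψ r / ψ r) * (vv r * (-(deriv u r)))) r := by
    intro r hr
    have hDr := hDneg r hr
    have hvvr := hvvneg r hr
    have hvva := hvv_abs r hr
    have h1 : HasDerivAt (fun s => (-(vv s)) ^ (p / (p - 1)))
        ((-(-(u r ^ q) - ((n:ℝ) - 1) * (deriv ψ r / ψ r) * vv r)) * (p / (p - 1)) *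
          (-(vv r)) ^ (p / (p - 1) - 1)) r :=
      ((hvv' r hr).neg).rpow_const (Or.inl (neg_pos.mpr hvvr).ne')
    have h2 : HasDerivAt (fun s => u s ^ (q + 1))
        (deriv u r * (q + 1) * u r ^ (q + 1 - 1)) r :=
      ((hudiff r hr.le).hasDerivAt).rpow_const (Or.inl (hupos r hr.le).ne')
    have h3 := (h1.const_mul ((p - 1) / p)).add (h2.div_const (q + 1))
    have hev : (fun s => (p - 1) / p * (-(vv s)) ^ (p / (p - 1)) + u s ^ (q + 1) / (q + 1))
        =ᶠ[nhds r] energyF p q u := by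
      filter_upwards [isOpen_Ioi.mem_nhds (Set.mem_Ioi.mpr hr)] with s hs
      have ha := hvv_abs s hs
      simp only [energyF]
      congr 1
      rw [ha, ← Real.rpow_mul (abs_nonneg _),
        show (p - 1) * (p / (p - 1)) = p by field_simp]
    have hF := h3.congr_of_eventuallyEq hev.symm
    refine hF.congr_deriv ?_
    have e1 : (-(vv r)) ^ (p / (p - 1) - 1) = -deriv u r := by
      rw [hvva, ← Real.rpow_mul (abs_nonneg _),
        show (p - 1) * (p / (p - 1) - 1) = 1 by field_simp; ring,
        Real.rpow_one, abs_of_neg hDr]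
    have e2 : u r ^ (q + 1 - 1) = u r ^ q := by rw [show q + 1 - 1 = q by ring]
    rw [e1, e2]
    field_simp
    ring
  have hFanti : AntitoneOn (energyF p q u) (Set.Ioi 0) := by
    apply antitoneOn_of_deriv_nonpos (convex_Ioi 0)
      (fun r hr => (hF' r hr).continuousAt.continuousWithinAt)
      (fun r hr => by
        rw [interior_Ioi] at hr
        exact (hF' r hr).differentiableAt.differentiableWithinAt)
    intro r hr
    rw [interior_Ioi] at hr
    rw [(hF' r hr).deriv]
    have h1 : vv r * (-(deriv u r)) < 0 :=
      mul_neg_of_neg_of_pos (hvvneg r hr) (by linarith [hDneg r hr])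
    have h2 : 0 < ((n:ℝ) - 1) * (deriv ψ r / ψ r) :=
      mul_pos (by linarith) (div_pos (by linarith [hψ'ge1 r hr.le]) (hψpos r hr))
    exact (mul_neg_of_pos_of_neg h2 h1).le
  have hFnonneg : ∀ r : ℝ, 0 ≤ r → 0 ≤ energyF p q u r := by
    intro r hr
    have h1 : 0 ≤ (p - 1) / p * |deriv u r| ^ p :=
      mul_nonneg (div_nonneg hp1'.le hp0.le) (Real.rpow_nonneg (abs_nonneg _) _)
    have h2 : 0 ≤ u r ^ (q + 1) / (q + 1) :=
      div_nonneg (Real.rpow_nonneg (hupos r hr).le _) hq1.le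
    simp only [energyF]
    linarith
  set L := ⨅ r : ℝ, energyF p q u (max r 1) with hL
  have hFv_anti : Antitone fun r : ℝ => energyF p q u (max r 1) := fun a b hab =>
    hFanti (Set.mem_Ioi.mpr (lt_of_lt_of_le one_pos (le_max_right a 1)))
      (Set.mem_Ioi.mpr (lt_of_lt_of_le one_pos (le_max_right b 1)))
      (max_le_max hab le_rfl)
  have hFv_bdd : BddBelow (Set.range fun r : ℝ => energyF p q u (max r 1)) := by
    refine ⟨0, ?_⟩
    rintro x ⟨r, rfl⟩
    exact hFnonneg _ (le_trans zero_le_one (le_max_right r 1))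
  have hFlim : Tendsto (energyF p q u) atTop (nhds L) := by
    refine (tendsto_atTop_ciInf hFv_anti hFv_bdd).congr' ?_
    filter_upwards [eventually_ge_atTop (1:ℝ)] with r hr
    rw [max_eq_left hr]
  have hcq : ContinuousAt (fun x : ℝ => x ^ (q + 1)) lam :=
    Real.continuousAt_rpow_const lam (q + 1) (Or.inr hq1.le)
  have hu2 : Tendsto (fun r => u r ^ (q + 1) / (q + 1)) atTop
      (nhds (lam ^ (q + 1) / (q + 1))) :=
    (Tendsto.comp hcq.tendsto hulim).div_const _
  set c1 := p / (p - 1) * (L - lam ^ (q + 1) / (q + 1)) with hc1def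
  have hDplim : Tendsto (fun r => |deriv u r| ^ p) atTop (nhds c1) := by
    have h := (hFlim.sub hu2).const_mul (p / (p - 1))
    refine Tendsto.congr (fun r => ?_) h
    simp only [energyF]
    field_simp
    ring
  have hc1nn : 0 ≤ c1 :=
    ge_of_tendsto hDplim (Eventually.of_forall fun r => Real.rpow_nonneg (abs_nonneg _) _)
  have hc1 : c1 = 0 := by
    by_contra hne
    have hc1pos : 0 < c1 := hc1nn.lt_of_ne (Ne.symm hne)
    set δ := (c1 / 2) ^ (1 / p) with hδ
    have hδpos : 0 < δ := Real.rpow_pos_of_pos (by linarith) _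
    have hev : ∀ᶠ r : ℝ in atTop, deriv u r ≤ -δ := by
      filter_upwards [hDplim.eventually (eventually_ge_nhds (by linarith : c1 / 2 < c1)),
        eventually_ge_atTop (1:ℝ)] with r h1 h2
      have h3 : (c1 / 2) ^ (1 / p) ≤ (|deriv u r| ^ p) ^ (1 / p) :=
        Real.rpow_le_rpow (by linarith) h1 (by positivity)
      rw [← Real.rpow_mul (abs_nonneg _), mul_one_div_cancel hp0.ne', Real.rpow_one] at h3
      have hDr : deriv u r < 0 := hDneg r (by linarith)
      rw [abs_of_neg hDr] at h3
      linarith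
    obtain ⟨R, hR⟩ := eventually_atTop.mp (hev.and (eventually_ge_atTop (1:ℝ)))
    set R1 := max R 1 with hR1
    have hR1pos : (0:ℝ) < R1 := lt_of_lt_of_le one_pos (le_max_right R 1)
    have hd : ∀ r : ℝ, R1 ≤ r → HasDerivAt (fun s => u s + δ * s) (deriv u r + δ) r := by
      intro r hr
      have hr0 : (0:ℝ) ≤ r := le_trans hR1pos.le hr
      have hlin : HasDerivAt (fun s : ℝ => δ * s) δ r := by
        simpa using (hasDerivAt_id r).const_mul δ
      exact ((hudiff r hr0).hasDerivAt).add hlin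
    have hg : AntitoneOn (fun s => u s + δ * s) (Set.Ici R1) := by
      apply antitoneOn_of_deriv_nonpos (convex_Ici R1)
        (fun r hr => (hd r hr).continuousAt.continuousWithinAt)
        (fun r hr => by
          rw [interior_Ici] at hr
          exact (hd r hr.le).differentiableAt.differentiableWithinAt)
      intro r hr
      rw [interior_Ici] at hr
      rw [(hd r hr.le).deriv]
      have h5 := (hR r (le_trans (le_max_left R 1) hr.le)).1
      linarith
    set r0 := R1 + (u R1 + 1) / δ with hr0
    have huR1 : 0 < u R1 := hupos R1 hR1pos.le
    have hr0ge : R1 ≤ r0 :=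
      le_add_of_nonneg_right (div_nonneg (by linarith) hδpos.le)
    have h4 : u r0 + δ * r0 ≤ u R1 + δ * R1 :=
      hg Set.self_mem_Ici (Set.mem_Ici.mpr hr0ge) hr0ge
    have h5 : δ * r0 = δ * R1 + (u R1 + 1) := by
      rw [hr0, mul_add, mul_div_cancel₀ _ hδpos.ne']
    have h6 : 0 < u r0 := hupos r0 (le_trans hR1pos.le hr0ge)
    linarith
  have hDabs : Tendsto (fun r => |deriv u r|) atTop (nhds 0) := by
    have h0 : Tendsto (fun r => |deriv u r| ^ p) atTop (nhds 0) := hc1 ▸ hDplim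
    have hcont : ContinuousAt (fun x : ℝ => x ^ (1 / p)) 0 :=
      Real.continuousAt_rpow_const 0 (1 / p) (Or.inr (by positivity))
    have h2 := hcont.tendsto.comp h0
    rw [Real.zero_rpow (one_div_ne_zero hp0.ne')] at h2
    refine h2.congr fun r => ?_
    simp only [Function.comp_apply]
    rw [← Real.rpow_mul (abs_nonneg _), mul_one_div_cancel hp0.ne', Real.rpow_one]
  have hD0 : Tendsto (deriv u) atTop (nhds 0) :=
    squeeze_zero_norm (fun r => le_of_eq (Real.norm_eq_abs _)) hDabs
  exact ⟨lam, hlam0, hlamlt, hulim, hD0⟩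
end

section
/- Let ψ be a Cartan–Hadamard model function such that ψ″ > 0 on some nonempty open interval (r₁, r₂) ⊂ (0,∞), and let u be a global radial solution with initial datum α > 0. Then there exists r̄ > 0 such that P_u(r) < 0 for every r > r̄. -/
open Real Filter MeasureTheory
open scoped ENNReal Topology

private lemma tmap_tendsto {p : ℝ} (hp : 1 < p) :
    Tendsto (fun x : ℝ => |x| ^ (p - 2) * x) (𝓝 0) (𝓝 0) := by
  apply squeeze_zero_norm (a := fun x : ℝ => |x| ^ (p - 1))
  · intro x
    rcases eq_or_ne x 0 with h | h
    · simp [h, Real.zero_rpow (show p - 1 ≠ 0 by intro hc; linarith)]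
    · have hx : 0 < |x| := abs_pos.mpr h
      have h1 : ‖|x| ^ (p - 2) * x‖ = |x| ^ (p - 2) * |x| := by
        rw [Real.norm_eq_abs, abs_mul, abs_of_nonneg (Real.rpow_nonneg (abs_nonneg x) _)]
      rw [h1, show p - 1 = (p - 2) + 1 by ring, Real.rpow_add_one hx.ne']
  · have hc : Continuous (fun x : ℝ => |x| ^ (p - 1)) :=
      continuous_abs.rpow_const (fun x => Or.inr (by linarith))
    have := hc.tendsto 0
    simpa [Real.zero_rpow (show p - 1 ≠ 0 by intro hc'; linarith)] using this

set_option maxHeartbeats 2000000 in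
/-- if `ψ'' > 0` on some open interval of `(0,∞)`, then the Pohozaev
function is eventually strictly negative. -/
theorem statement_5 (n : ℕ) (hn : 2 ≤ n) (p q : ℝ) (hp1 : 1 < p) (hpn : p < n)
    (hq : (n : ℝ) * p / ((n : ℝ) - p) - 1 ≤ q)
    (ψ : ℝ → ℝ) (hψ : IsCHModel ψ)
    (r₁ r₂ : ℝ) (hr₁ : 0 ≤ r₁) (hr₁₂ : r₁ < r₂)
    (hconv : ∀ s : ℝ, r₁ < s → s < r₂ → 0 < deriv (deriv ψ) s)
    (α : ℝ) (hα : 0 < α)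
    (u : ℝ → ℝ) (hu : IsRadialSolution n p q ψ ⊤ α u) :
    ∃ rbar : ℝ, 0 < rbar ∧ ∀ r : ℝ, rbar < r → pohozaevP n p q ψ u r < 0 := by
  obtain ⟨hsmooth, hψ0, hψ'0, hψ'', hψpos⟩ := hψ
  -- numeric facts
  have hp0 : (0:ℝ) < p := by linarith
  have hp1' : p - 1 ≠ 0 := by intro h; linarith
  have hnR : (2:ℝ) ≤ (n:ℝ) := by exact_mod_cast hn
  have hn0 : (0:ℝ) < (n:ℝ) := by linarith
  have hnp : (0:ℝ) < (n:ℝ) - p := by linarith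
  have hq1pos : 0 < q + 1 := by
    have h1 : 0 < (n:ℝ) * p / ((n:ℝ) - p) := by positivity
    linarith
  have hcpq : (p-1)/p + 1/(q+1) ≤ ((n:ℝ)-1)/(n:ℝ) := by
    have h1' : (n:ℝ)*p ≤ (q+1) * ((n:ℝ)-p) := by
      have := (div_le_iff₀ hnp).mp (by linarith : (n:ℝ)*p/((n:ℝ)-p) ≤ q+1)
      linarith
    have h2 : 1/(q+1) ≤ ((n:ℝ)-p)/((n:ℝ)*p) := by
      rw [div_le_div_iff₀ hq1pos (by positivity)]
      nlinarith
    have h3 : (p-1)/p + ((n:ℝ)-p)/((n:ℝ)*p) = ((n:ℝ)-1)/(n:ℝ) := by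
      field_simp
      ring
    linarith
  -- ψ facts
  have hψcont : Continuous ψ := hsmooth.continuous
  have hψdiff : Differentiable ℝ ψ := hsmooth.differentiable (by simp)
  have hψtop : ContDiff ℝ ((⊤:ℕ∞):WithTop ℕ∞) ψ := hsmooth.of_le (by simp)
  have hψ'smooth := (contDiff_infty_iff_deriv.mp hψtop).2
  have hψ'diff : Differentiable ℝ (deriv ψ) :=
    hψ'smooth.differentiable (by simp)
  have hψnonneg : ∀ r : ℝ, 0 ≤ r → 0 ≤ ψ r := by
    intro r hr
    rcases eq_or_lt_of_le hr with h | h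
    · simp [← h, hψ0]
    · exact (hψpos r h).le
  -- the volume function V
  set V : ℝ → ℝ := fun r => ∫ s in (0:ℝ)..r, ψ s ^ (n-1) with hV_def
  have hVc : Continuous (fun s : ℝ => ψ s ^ (n-1)) := hψcont.pow _
  have hVd : ∀ r : ℝ, HasDerivAt V (ψ r ^ (n-1)) r := fun r =>
    intervalIntegral.integral_hasDerivAt_right ((hVc.intervalIntegrable) _ _)
      (hVc.stronglyMeasurableAtFilter _ _) hVc.continuousAt
  have hV0 : V 0 = 0 := intervalIntegral.integral_same
  have hVnonneg : ∀ r : ℝ, 0 ≤ r → 0 ≤ V r := fun r hr =>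
    intervalIntegral.integral_nonneg hr (fun s hs => pow_nonneg (hψnonneg s hs.1) _)
  have hVpos : ∀ r : ℝ, 0 < r → 0 < V r := fun r hr =>
    intervalIntegral.intervalIntegral_pos_of_pos_on ((hVc.intervalIntegrable) _ _)
      (fun s hs => pow_pos (hψpos s hs.1) _) hr
  -- the function G and its monotonicity
  set G : ℝ → ℝ := fun r => deriv ψ r * V r - ψ r ^ n / n with hG_def
  have hGd : ∀ r : ℝ, HasDerivAt G (deriv (deriv ψ) r * V r) r := by
    intro r
    have h1 : HasDerivAt (fun s => deriv ψ s * V s)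
        (deriv (deriv ψ) r * V r + deriv ψ r * ψ r ^ (n-1)) r :=
      ((hψ'diff r).hasDerivAt).mul (hVd r)
    have h2 : HasDerivAt (fun s => ψ s ^ n / (n:ℝ))
        (((n:ℝ) * ψ r ^ (n-1) * deriv ψ r) / (n:ℝ)) r :=
      (((hψdiff r).hasDerivAt).pow n).div_const _
    have h3 := h1.sub h2
    convert h3 using 1
    rfl
    rfl
    rfl
    field_simp
    ring
  have hGc : Continuous G :=
    continuous_iff_continuousAt.mpr fun r => (hGd r).differentiableAt.continuousAt
  have hG0 : G 0 = 0 := by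
    simp [hG_def, hV0, hψ0, zero_pow (show n ≠ 0 by omega)]
  have hGmono : MonotoneOn G (Set.Ici 0) := by
    apply monotoneOn_of_deriv_nonneg (convex_Ici 0) hGc.continuousOn
      (fun x _ => (hGd x).differentiableAt.differentiableWithinAt)
    intro x hx
    rw [interior_Ici] at hx
    rw [(hGd x).deriv]
    exact mul_nonneg (hψ'' x (le_of_lt hx)) (hVnonneg x (le_of_lt hx))
  have hGnonneg : ∀ r : ℝ, 0 ≤ r → 0 ≤ G r := by
    intro r hr
    have := hGmono (Set.mem_Ici.mpr le_rfl) (Set.mem_Ici.mpr hr) hr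
    rwa [hG0] at this
  have hr₂pos : 0 < r₂ := lt_of_le_of_lt hr₁ hr₁₂
  -- strict positivity of G beyond r₂
  have hδpos : 0 < G r₂ := by
    set a : ℝ := max r₁ (r₂/2) with ha_def
    have ha0 : 0 < a := lt_of_lt_of_le (by linarith) (le_max_right _ _)
    have har₂ : a < r₂ := max_lt hr₁₂ (by linarith)
    have har₁ : r₁ ≤ a := le_max_left _ _
    have hGstrict : StrictMonoOn G (Set.Icc a r₂) := by
      apply strictMonoOn_of_deriv_pos (convex_Icc _ _) hGc.continuousOn
      intro x hx
      rw [interior_Icc] at hx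
      rw [(hGd x).deriv]
      exact mul_pos (hconv x (lt_of_le_of_lt har₁ hx.1) hx.2) (hVpos x (ha0.trans hx.1))
    have h1 : G a < G r₂ :=
      hGstrict (Set.mem_Icc.mpr ⟨le_rfl, har₂.le⟩) (Set.mem_Icc.mpr ⟨har₂.le, le_rfl⟩) har₂
    have h2 : 0 ≤ G a := hGnonneg a ha0.le
    linarith
  -- bound on Kfun
  have hKle : ∀ r : ℝ, 0 < r → Kfun n p q ψ r ≤ -(((n:ℝ)-1) / ψ r) * G r := by
    intro r hr
    have hψr : 0 < ψ r := hψpos r hr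
    have h1 : Kfun n p q ψ r
        = ((p-1)/p + 1/(q+1)) * ψ r ^ (n-1) - ((n:ℝ)-1) * (deriv ψ r / ψ r) * V r := rfl
    have h2 : ((p-1)/p + 1/(q+1)) * ψ r ^ (n-1) ≤ (((n:ℝ)-1)/(n:ℝ)) * ψ r ^ (n-1) :=
      mul_le_mul_of_nonneg_right hcpq (pow_nonneg hψr.le _)
    have h3 : (((n:ℝ)-1)/(n:ℝ)) * ψ r ^ (n-1) - ((n:ℝ)-1) * (deriv ψ r / ψ r) * V r
        = -(((n:ℝ)-1)/ψ r) * G r := by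
      simp only [hG_def]
      rw [show ψ r ^ n = ψ r ^ (n-1) * ψ r by rw [← pow_succ]; congr 1; omega]
      field_simp
      ring
    rw [h1]
    linarith
  -- basic solution facts
  have hT : ∀ r : ℝ, ENNReal.ofReal r < (⊤:ℝ≥0∞) := fun r => ENNReal.ofReal_lt_top
  have hupos : ∀ r : ℝ, 0 ≤ r → 0 < u r := fun r hr => hu.pos r hr (hT r)
  have hudiff : ∀ r : ℝ, 0 ≤ r → DifferentiableAt ℝ u r := fun r hr => hu.diff r hr (hT r)
  have hset : {r : ℝ | 0 ≤ r ∧ ENNReal.ofReal r < (⊤:ℝ≥0∞)} = Set.Ici 0 := by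
    ext r; simp [ENNReal.ofReal_lt_top]
  have hu'cont : ContinuousOn (deriv u) (Set.Ici 0) := hset ▸ hu.deriv_cont
  set w : ℝ → ℝ := fun s => ψ s ^ (n-1) * |deriv u s| ^ (p-2) * deriv u s with hw_def
  have hwd : ∀ r : ℝ, 0 < r → HasDerivAt w (-(ψ r ^ (n-1) * u r ^ q)) r :=
    fun r hr => hu.eqn r hr (hT r)
  -- limits at 0⁺
  have hu'0 : Tendsto (deriv u) (𝓝[>] (0:ℝ)) (𝓝 0) := by
    have h1 : Tendsto (deriv u) (𝓝[Set.Ici (0:ℝ)] 0) (𝓝 (deriv u 0)) :=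
      hu'cont 0 Set.self_mem_Ici
    rw [hu.deriv_init] at h1
    exact h1.mono_left (nhdsWithin_mono _ Set.Ioi_subset_Ici_self)
  have hψpow0 : Tendsto (fun s : ℝ => ψ s ^ (n-1)) (𝓝[>] (0:ℝ)) (𝓝 0) := by
    have := ((hVc.tendsto 0)).mono_left (nhdsWithin_le_nhds (s := Set.Ioi (0:ℝ)))
    simpa [hψ0, zero_pow (show n - 1 ≠ 0 by omega)] using this
  have hwt0 : Tendsto w (𝓝[>] (0:ℝ)) (𝓝 0) := by
    have h2 : Tendsto (fun s => |deriv u s| ^ (p-2) * deriv u s) (𝓝[>] (0:ℝ)) (𝓝 0) :=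
      (tmap_tendsto hp1).comp hu'0
    have h3 := hψpow0.mul h2
    rw [mul_zero] at h3
    exact h3.congr (fun s => by rw [hw_def]; ring)
  -- w is negative on (0,∞)
  have hwkey : ∀ ε r' : ℝ, 0 < ε → ε < r' → w r' < w ε := by
    intro ε r' hε hεr
    have hmono : StrictAntiOn w (Set.Icc ε r') := by
      apply strictAntiOn_of_deriv_neg (convex_Icc _ _)
      · intro x hx
        exact ((hwd x (hε.trans_le hx.1)).differentiableAt).continuousAt.continuousWithinAt
      · intro x hx
        rw [interior_Icc] at hx
        have hx0 : 0 < x := hε.trans hx.1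
        rw [(hwd x hx0).deriv]
        have h1 : 0 < ψ x ^ (n-1) * u x ^ q :=
          mul_pos (pow_pos (hψpos x hx0) _) (Real.rpow_pos_of_pos (hupos x hx0.le) _)
        linarith
    exact hmono (Set.left_mem_Icc.mpr hεr.le) (Set.right_mem_Icc.mpr hεr.le) hεr
  have hwneg : ∀ r : ℝ, 0 < r → w r < 0 := by
    intro r hr
    have h2 : w (r/2) ≤ 0 := by
      have hev : ∀ᶠ ε in 𝓝[>] (0:ℝ), w (r/2) ≤ w ε := by
        filter_upwards [Ioo_mem_nhdsGT
          (half_pos hr)] with ε hε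
        exact (hwkey ε (r/2) hε.1 hε.2).le
      exact ge_of_tendsto hwt0 hev
    calc w r < w (r/2) := hwkey (r/2) r (half_pos hr) (by linarith)
    _ ≤ 0 := h2
  -- u' is negative on (0,∞)
  have hu'neg : ∀ r : ℝ, 0 < r → deriv u r < 0 := by
    intro r hr
    have hw := hwneg r hr
    rcases lt_trichotomy (deriv u r) 0 with h | h | h
    · exact h
    · exfalso; simp [hw_def, h] at hw
    · exfalso
      have h1 : 0 < ψ r ^ (n-1) * |deriv u r| ^ (p-2) * deriv u r :=
        mul_pos (mul_pos (pow_pos (hψpos r hr) _)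
          (Real.rpow_pos_of_pos (abs_pos.mpr h.ne') _)) h
      rw [hw_def] at hw
      simp only at hw
      linarith
  -- the auxiliary function hf = |u'|^{p-1}
  set hf : ℝ → ℝ := fun s => -w s / ψ s ^ (n-1) with hf_def
  have hwr' : ∀ s : ℝ, 0 < s → w s = -(ψ s ^ (n-1) * |deriv u s| ^ (p-1)) := by
    intro s hs
    have h' := hu'neg s hs
    have habs : |deriv u s| = -deriv u s := abs_of_neg h'
    have habsne : |deriv u s| ≠ 0 := by rw [habs]; intro hc; linarith
    simp only [hw_def]
    rw [show p - 1 = (p-2) + 1 by ring, Real.rpow_add_one habsne]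
    rw [habs]
    ring
  have hfr' : ∀ s : ℝ, 0 < s → hf s = |deriv u s| ^ (p-1) := by
    intro s hs
    have hψs : ψ s ^ (n-1) ≠ 0 := pow_ne_zero _ (hψpos s hs).ne'
    simp only [hf_def]
    rw [hwr' s hs, neg_neg, mul_comm, mul_div_assoc, div_self hψs, mul_one]
  have hfpos : ∀ s : ℝ, 0 < s → 0 < hf s := by
    intro s hs
    rw [hfr' s hs]
    exact Real.rpow_pos_of_pos (abs_pos.mpr (hu'neg s hs).ne) _
  have hfpow : ∀ s : ℝ, 0 < s → hf s ^ (p/(p-1)) = |deriv u s| ^ p := by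
    intro s hs
    rw [hfr' s hs, ← Real.rpow_mul (abs_nonneg _)]
    congr 1
    field_simp
  -- derivative of the Pohozaev function
  have hPd : ∀ r : ℝ, 0 < r → HasDerivAt (pohozaevP n p q ψ u)
      (|deriv u r| ^ p * Kfun n p q ψ r) r := by
    intro r hr
    have hψr : 0 < ψ r := hψpos r hr
    have hu'r : deriv u r < 0 := hu'neg r hr
    set x : ℝ := -deriv u r with hx_def
    have hxpos : 0 < x := neg_pos.mpr hu'r
    have habs : |deriv u r| = x := abs_of_neg hu'r
    have hune : u r ≠ 0 := (hupos r hr.le).ne'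
    have hAne : ψ r ^ (n-1) ≠ 0 := pow_ne_zero _ hψr.ne'
    have hDa := ((hψdiff r).hasDerivAt).pow (n-1)
    rw [show n - 1 - 1 = n - 2 from by omega] at hDa
    have hDV := hVd r
    have hDw := hwd r hr
    have hDu : HasDerivAt u (deriv u r) r := (hudiff r hr.le).hasDerivAt
    have hDh := (hDw.neg).div hDa hAne
    have hDhp := hDh.rpow_const (p := p/(p-1)) (Or.inl (hfpos r hr).ne')
    have hDuq := hDu.rpow_const (p := q+1) (Or.inl hune)
    have hDE := (hDhp.const_mul ((p-1)/p)).add (hDuq.div_const (q+1))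
    have hDP := (hDV.mul hDE).add ((hDw.mul hDu).div_const (q+1))
    have hEq : pohozaevP n p q ψ u =ᶠ[𝓝 r]
        (fun s => V s * ((p-1)/p * hf s ^ (p/(p-1)) + u s ^ (q+1)/(q+1))
          + (w s * u s)/(q+1)) := by
      filter_upwards [Ioi_mem_nhds hr] with s hs
      rw [hfpow s hs]
      simp only [pohozaevP, energyF, hV_def, hw_def]
      ring
    have hDP' := hDP.congr_of_eventuallyEq hEq
    convert hDP' using 1
    rfl
    rfl
    beta_reduce
    have hfr : -w r / ψ r ^ (n-1) = x ^ (p-1) := by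
      have h := hfr' r hr
      rw [habs] at h
      exact h
    have hwr : w r = -(ψ r ^ (n-1) * x ^ (p-1)) := by rw [hwr' r hr, habs]
    have hpow2 : (x ^ (p-1) : ℝ) ^ (p/(p-1) - 1) = x := by
      rw [← Real.rpow_mul hxpos.le,
        show (p-1) * (p/(p-1) - 1) = 1 by field_simp; ring, Real.rpow_one]
    have hpow1 : (x ^ (p-1) : ℝ) ^ (p/(p-1)) = x ^ (p-1) * x := by
      rw [← Real.rpow_add_one hxpos.ne' (p-1), ← Real.rpow_mul hxpos.le]
      congr 1
      field_simp
      ring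
    have hxp : |deriv u r| ^ p = x ^ (p-1) * x := by
      rw [habs, ← Real.rpow_add_one hxpos.ne' (p-1)]
      congr 1
      ring
    have hq2 : u r ^ (q+1) = u r ^ q * u r := Real.rpow_add_one hune q
    have hq3 : u r ^ (q+1-1) = u r ^ q := by congr 1; ring
    have hA2 : ψ r ^ (n-1) = ψ r ^ (n-2) * ψ r := by
      rw [← pow_succ]; congr 1; omega
    have hcast : ((n-1 : ℕ) : ℝ) = (n:ℝ) - 1 := by
      push_cast [Nat.cast_sub (show 1 ≤ n by omega)]; ring
    have hBne : ψ r ^ (n-2) ≠ 0 := pow_ne_zero _ hψr.ne'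
    have hder : deriv u r = -x := by rw [hx_def, neg_neg]
    simp only [Kfun, hV_def]
    simp only [Pi.add_apply, Pi.div_apply, Pi.neg_apply, Pi.pow_apply]
    rw [hxp, hfr, hpow1, hpow2, hq2, hq3, hwr, hA2, hcast, hder]
    field_simp
    ring
  -- P tends to 0 at 0⁺
  have hPt0 : Tendsto (pohozaevP n p q ψ u) (𝓝[>] (0:ℝ)) (𝓝 0) := by
    have hVt : Tendsto V (𝓝[>] (0:ℝ)) (𝓝 0) := by
      have := ((hVd 0).continuousAt.tendsto).mono_left
        (nhdsWithin_le_nhds (s := Set.Ioi (0:ℝ)))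
      rwa [hV0] at this
    have hut : Tendsto u (𝓝[>] (0:ℝ)) (𝓝 α) := by
      have := ((hudiff 0 le_rfl).continuousAt.tendsto).mono_left
        (nhdsWithin_le_nhds (s := Set.Ioi (0:ℝ)))
      rwa [hu.init] at this
    have hT2 : Tendsto (fun y : ℝ => |y| ^ p) (𝓝 0) (𝓝 0) := by
      have hc : Continuous (fun y : ℝ => |y| ^ p) :=
        continuous_abs.rpow_const (fun x => Or.inr hp0.le)
      have := hc.tendsto 0
      simpa [Real.zero_rpow hp0.ne'] using this
    have hEt : Tendsto (fun s => energyF p q u s) (𝓝[>] (0:ℝ))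
        (𝓝 ((p-1)/p * 0 + α ^ (q+1)/(q+1))) := by
      apply Tendsto.add
      · exact (hT2.comp hu'0).const_mul _
      · exact Tendsto.div_const
          (((Real.continuousAt_rpow_const α (q+1) (Or.inl hα.ne')).tendsto).comp hut) _
    have htm : Tendsto (fun s => |deriv u s| ^ (p-2) * deriv u s * u s) (𝓝[>] (0:ℝ))
        (𝓝 (0 * α)) :=
      ((tmap_tendsto hp1).comp hu'0).mul hut
    have hfin := (hVt.mul hEt).add ((hψpow0.div_const (q+1)).mul htm)
    have h00 : (0:ℝ) * ((p-1)/p * 0 + α ^ (q+1)/(q+1)) + 0/(q+1) * (0*α) = 0 := by ring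
    rw [h00] at hfin
    exact hfin
  -- P is nonpositive on (0,∞)
  have hPle : ∀ r : ℝ, 0 < r → pohozaevP n p q ψ u r ≤ 0 := by
    intro r hr
    have key : ∀ ε : ℝ, 0 < ε → ε < r →
        pohozaevP n p q ψ u r ≤ pohozaevP n p q ψ u ε := by
      intro ε hε hεr
      have hmono : AntitoneOn (pohozaevP n p q ψ u) (Set.Icc ε r) := by
        apply antitoneOn_of_deriv_nonpos (convex_Icc _ _)
        · intro s hs
          exact ((hPd s (hε.trans_le hs.1)).differentiableAt.continuousAt).continuousWithinAt
        · intro s hs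
          rw [interior_Icc] at hs
          exact ((hPd s (hε.trans hs.1)).differentiableAt).differentiableWithinAt
        · intro s hs
          rw [interior_Icc] at hs
          have hs0 : 0 < s := hε.trans hs.1
          rw [(hPd s hs0).deriv]
          have hK : Kfun n p q ψ s ≤ 0 := by
            have h1 := hKle s hs0
            have h2 : 0 ≤ G s := hGnonneg s hs0.le
            have h3 : 0 ≤ ((n:ℝ)-1)/ψ s := div_nonneg (by linarith) (hψpos s hs0).le
            nlinarith [mul_nonneg h3 h2]
          exact mul_nonpos_of_nonneg_of_nonpos (Real.rpow_nonneg (abs_nonneg _) p) hK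
      exact hmono (Set.mem_Icc.mpr ⟨le_rfl, hεr.le⟩) (Set.mem_Icc.mpr ⟨hεr.le, le_rfl⟩) hεr.le
    have hev : ∀ᶠ ε in 𝓝[>] (0:ℝ), pohozaevP n p q ψ u r ≤ pohozaevP n p q ψ u ε := by
      filter_upwards [Ioo_mem_nhdsGT hr] with ε hε
      exact key ε hε.1 hε.2
    exact ge_of_tendsto hPt0 hev
  -- conclusion
  refine ⟨r₂, hr₂pos, ?_⟩
  intro r hr
  have hSA : StrictAntiOn (pohozaevP n p q ψ u) (Set.Ici r₂) := by
    apply strictAntiOn_of_deriv_neg (convex_Ici r₂)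
    · intro s hs
      exact ((hPd s (hr₂pos.trans_le hs)).differentiableAt.continuousAt).continuousWithinAt
    · intro s hs
      rw [interior_Ici] at hs
      have hs0 : 0 < s := hr₂pos.trans hs
      rw [(hPd s hs0).deriv]
      have hK : Kfun n p q ψ s < 0 := by
        have h1 := hKle s hs0
        have h2 : 0 < G s := by
          have := hGmono (Set.mem_Ici.mpr hr₂pos.le) (Set.mem_Ici.mpr hs0.le) (le_of_lt hs)
          linarith
        have h3 : 0 < ((n:ℝ)-1)/ψ s := div_pos (by linarith) (hψpos s hs0)
        nlinarith [mul_pos h3 h2]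
      have hx : 0 < |deriv u s| ^ p :=
        Real.rpow_pos_of_pos (abs_pos.mpr (hu'neg s hs0).ne) p
      exact mul_neg_of_pos_of_neg hx hK
  have h2 := hSA (Set.self_mem_Ici) (Set.mem_Ici.mpr hr.le) hr
  have h3 := hPle r₂ hr₂pos
  linarith
end

section
/- Let ψ be a Cartan–Hadamard model function and u a global radial solution with initial datum α > 0. Then −u′(r) ≥ Θ(r)^{1/(p−1)} · u(r)^{q/(p−1)} for every r > 0. -/
open Real Filter MeasureTheory
open scoped ENNReal Topology

/-- the gradient lower bound `-u'(r) ≥ Θ(r)^{1/(p-1)} u(r)^{q/(p-1)}`. -/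
theorem statement_6 (n : ℕ) (hn : 2 ≤ n) (p q : ℝ) (hp1 : 1 < p) (hpn : p < n)
    (hq : (n : ℝ) * p / ((n : ℝ) - p) - 1 ≤ q)
    (ψ : ℝ → ℝ) (hψ : IsCHModel ψ) (α : ℝ) (hα : 0 < α)
    (u : ℝ → ℝ) (hu : IsRadialSolution n p q ψ ⊤ α u) :
    ∀ r : ℝ, 0 < r →
      Theta n ψ r ^ (1 / (p - 1)) * u r ^ (q / (p - 1)) ≤ -deriv u r := by
  obtain ⟨hsm, hψ0, -, -, hψpos⟩ := hψ
  have hp0 : (0:ℝ) < p - 1 := by linarith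
  have hnreal : (2:ℝ) ≤ (n:ℝ) := by exact_mod_cast hn
  have hq0 : 0 ≤ q := by
    have hnp : (0:ℝ) < (n:ℝ) - p := by linarith
    have h1 : (1:ℝ) ≤ (n:ℝ) * p / ((n:ℝ) - p) := by
      rw [le_div_iff₀ hnp]; nlinarith
    linarith
  have hn1 : n - 1 ≠ 0 := by omega
  set c : ℝ → ℝ := fun s => ψ s ^ (n - 1) with hc_def
  have hc : Continuous c := (hsm.continuous).pow _
  have hcpos : ∀ s : ℝ, 0 < s → 0 < c s := fun s hs => pow_pos (hψpos s hs) _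
  set w : ℝ → ℝ := fun s => ψ s ^ (n - 1) * |deriv u s| ^ (p - 2) * deriv u s with hw_def
  have hw0 : w 0 = 0 := by simp [hw_def, hψ0, zero_pow hn1]
  have hT : ∀ r : ℝ, ENNReal.ofReal r < ⊤ := fun r => ENNReal.ofReal_lt_top
  have heqn : ∀ r : ℝ, 0 < r → HasDerivAt w (-(c r * u r ^ q)) r :=
    fun r hr => hu.eqn r hr (hT r)
  have hupos : ∀ r : ℝ, 0 ≤ r → 0 < u r := fun r hr => hu.pos r hr (hT r)
  have hset : {r : ℝ | 0 ≤ r ∧ ENNReal.ofReal r < (⊤:ℝ≥0∞)} = Set.Ici 0 := by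
    ext x; simp [ENNReal.ofReal_lt_top]
  have hdc : ContinuousOn (deriv u) (Set.Ici 0) := hset ▸ hu.deriv_cont
  -- continuity of w at 0 within Ici 0
  have habs : ∀ x : ℝ, |(|x| : ℝ) ^ (p - 2) * x| ≤ |x| ^ (p - 1) := by
    intro x
    rcases eq_or_ne x 0 with rfl | hx
    · simp [Real.zero_rpow (by linarith : p - 1 ≠ 0)]
    · have h0 : |x| ≠ 0 := abs_ne_zero.mpr hx
      rw [abs_mul, abs_of_nonneg (Real.rpow_nonneg (abs_nonneg x) _)]
      rw [show p - 1 = p - 2 + 1 by ring, Real.rpow_add_one h0]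
  have hwc0 : ContinuousWithinAt w (Set.Ici 0) 0 := by
    rw [ContinuousWithinAt, hw0]
    have hb : ∀ s, ‖w s‖ ≤ |c s| * |deriv u s| ^ (p - 1) := by
      intro s
      have : ‖w s‖ = |c s| * |(|deriv u s| : ℝ) ^ (p - 2) * deriv u s| := by
        rw [hw_def]; simp [hc_def, abs_mul, mul_assoc, abs_pow]
      rw [this]
      exact mul_le_mul_of_nonneg_left (habs _) (abs_nonneg _)
    refine squeeze_zero_norm hb ?_
    · have h1 : Filter.Tendsto (fun s => |c s|) (𝓝[Set.Ici 0] 0) (𝓝 0) := by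
        have := (hc.abs.tendsto 0).mono_left (nhdsWithin_le_nhds (s := Set.Ici 0))
        simpa [hc_def, hψ0, zero_pow hn1] using this
      have h2 : Filter.Tendsto (fun s => |deriv u s| ^ (p - 1)) (𝓝[Set.Ici 0] 0) (𝓝 0) := by
        have hcw : ContinuousWithinAt (fun s => |deriv u s| ^ (p - 1)) (Set.Ici 0) 0 :=
          ((hdc 0 (Set.mem_Ici.mpr le_rfl)).abs).rpow_const (Or.inr hp0.le)
        have : |deriv u 0| ^ (p - 1) = 0 := by
          rw [hu.deriv_init]; simp [Real.zero_rpow (by linarith : p - 1 ≠ 0)]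
        rw [ContinuousWithinAt, this] at hcw; exact hcw
      simpa using h1.mul h2
  have hwcont : ∀ r : ℝ, 0 < r → ContinuousOn w (Set.Icc 0 r) := by
    intro r hr x hx
    rcases eq_or_lt_of_le hx.1 with h0 | h0
    · subst h0
      exact hwc0.mono Set.Icc_subset_Ici_self
    · exact ((heqn x h0).continuousAt).continuousWithinAt
  -- w < 0 on (0,∞)
  have hwneg : ∀ s : ℝ, 0 < s → w s < 0 := by
    intro s hs
    have := strictAntiOn_of_deriv_neg (convex_Icc 0 s) (hwcont s hs)
      (fun x hx => by
        rw [interior_Icc] at hx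
        rw [(heqn x hx.1).deriv]
        have := mul_pos (hcpos x hx.1) (Real.rpow_pos_of_pos (hupos x hx.1.le) q)
        linarith)
      (Set.left_mem_Icc.mpr hs.le) (Set.right_mem_Icc.mpr hs.le) hs
    rwa [hw0] at this
  -- deriv u < 0 on (0,∞)
  have hune : ∀ s : ℝ, 0 < s → deriv u s < 0 := by
    intro s hs
    by_contra h
    push_neg at h
    have : 0 ≤ w s := by
      apply mul_nonneg (mul_nonneg (hcpos s hs).le (Real.rpow_nonneg (abs_nonneg _) _)) h
    linarith [hwneg s hs]
  -- u antitone on Ici 0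
  have huanti : AntitoneOn u (Set.Ici 0) := by
    apply antitoneOn_of_deriv_nonpos (convex_Ici 0)
      (fun x hx => (hu.diff x hx (hT x)).continuousAt.continuousWithinAt)
      (fun x hx => by rw [interior_Ici] at hx; exact (hu.diff x hx.le (hT x)).differentiableWithinAt)
    intro x hx
    rw [interior_Ici] at hx
    exact (hune x hx).le
  intro r hr
  -- key integral inequality: w r ≤ -(u r ^ q * ∫₀ʳ c)
  have hprim : ∀ x : ℝ, HasDerivAt (fun s => ∫ t in (0:ℝ)..s, c t) (c x) x :=
    fun x => (hc.integral_hasStrictDerivAt 0 x).hasDerivAt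
  have hprimcont : Continuous (fun s => ∫ t in (0:ℝ)..s, c t) :=
    intervalIntegral.continuous_primitive (fun a b => hc.intervalIntegrable a b) 0
  set G : ℝ → ℝ := fun s => w s + u r ^ q * ∫ t in (0:ℝ)..s, c t with hG_def
  have hGanti : AntitoneOn G (Set.Icc 0 r) := by
    apply antitoneOn_of_deriv_nonpos (convex_Icc 0 r)
    · exact (hwcont r hr).add (((hprimcont.continuousOn).const_smul (u r ^ q)).congr
        (fun x _ => by simp [smul_eq_mul]))
    · intro x hx
      rw [interior_Icc] at hx
      exact ((heqn x hx.1).add ((hprim x).const_mul (u r ^ q))).differentiableAt.differentiableWithinAt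
    · intro x hx
      rw [interior_Icc] at hx
      have hGd : HasDerivAt G (-(c x * u x ^ q) + u r ^ q * c x) x :=
        (heqn x hx.1).add ((hprim x).const_mul (u r ^ q))
      rw [hGd.deriv]
      have hur : u r ^ q ≤ u x ^ q :=
        Real.rpow_le_rpow (hupos r hr.le).le
          (huanti (Set.mem_Ici.mpr hx.1.le) (Set.mem_Ici.mpr hr.le) hx.2.le) hq0
      have := mul_le_mul_of_nonneg_left hur (hcpos x hx.1).le
      nlinarith [hcpos x hx.1]
  have hkey : w r ≤ -(u r ^ q * ∫ t in (0:ℝ)..r, c t) := by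
    have := hGanti (Set.left_mem_Icc.mpr hr.le) (Set.right_mem_Icc.mpr hr.le) hr.le
    simp only [hG_def, hw0, intervalIntegral.integral_same, mul_zero, add_zero, zero_add] at this
    linarith
  -- final algebra
  have hdu : deriv u r < 0 := hune r hr
  have hadu : (0:ℝ) < |deriv u r| := abs_pos.mpr hdu.ne
  have hwval : w r = -(c r * |deriv u r| ^ (p - 1)) := by
    have key : (|deriv u r| : ℝ) ^ (p - 1) = |deriv u r| ^ (p - 2) * |deriv u r| := by
      rw [show p - 1 = p - 2 + 1 by ring, Real.rpow_add_one hadu.ne']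
    rw [hw_def, hc_def]
    simp only
    rw [key, abs_of_neg hdu]
    generalize (-deriv u r : ℝ) ^ (p - 2) = A
    ring
  have hIpos : 0 ≤ ∫ t in (0:ℝ)..r, c t := by
    apply intervalIntegral.integral_nonneg hr.le
    intro t ht
    have hψt : 0 ≤ ψ t := by
      rcases eq_or_lt_of_le ht.1 with h | h
      · rw [← h, hψ0]
      · exact (hψpos t h).le
    exact pow_nonneg hψt _
  have hmain : Theta n ψ r * u r ^ q ≤ |deriv u r| ^ (p - 1) := by
    rw [Theta, div_mul_eq_mul_div, div_le_iff₀ (hcpos r hr)]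
    have : u r ^ q * (∫ t in (0:ℝ)..r, c t) ≤ c r * |deriv u r| ^ (p - 1) := by
      have := hkey
      rw [hwval] at this
      linarith
    calc (∫ s in (0:ℝ)..r, ψ s ^ (n-1)) * u r ^ q
        = u r ^ q * ∫ t in (0:ℝ)..r, c t := by rw [mul_comm]
      _ ≤ c r * |deriv u r| ^ (p - 1) := this
      _ = |deriv u r| ^ (p - 1) * ψ r ^ (n - 1) := by rw [mul_comm]
  have hTheta0 : 0 ≤ Theta n ψ r := div_nonneg hIpos (hcpos r hr).le
  have hur0 : 0 ≤ u r := (hupos r hr.le).le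
  have h1 : (Theta n ψ r * u r ^ q) ^ (1 / (p - 1)) ≤ (|deriv u r| ^ (p - 1)) ^ (1 / (p - 1)) :=
    Real.rpow_le_rpow (mul_nonneg hTheta0 (Real.rpow_nonneg hur0 q)) hmain
      (by positivity)
  have h2 : (|deriv u r| ^ (p - 1)) ^ (1 / (p - 1)) = |deriv u r| := by
    rw [← Real.rpow_mul (abs_nonneg _), mul_one_div, div_self hp0.ne', Real.rpow_one]
  have h3 : (Theta n ψ r * u r ^ q) ^ (1 / (p - 1)) =
      Theta n ψ r ^ (1 / (p - 1)) * u r ^ (q / (p - 1)) := by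
    rw [Real.mul_rpow hTheta0 (Real.rpow_nonneg hur0 q), ← Real.rpow_mul hur0,
      mul_one_div]
  rw [h3, h2] at h1
  rwa [abs_of_neg hdu] at h1
end

section
/- Let ψ be a Cartan–Hadamard model function satisfying ∫₀^∞ Θ(s)^{1/(p−1)} ds = +∞ (p-stochastic completeness). Then every global radial solution u is strictly decreasing on (0,∞) and satisfies u(r) → 0 as r → +∞. -/
open Real Filter MeasureTheory
open scoped ENNReal Topology

private lemma phi_cont {p : ℝ} (hp : 1 < p) :
    Continuous fun x : ℝ => |x| ^ (p - 2) * x := by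
  rw [continuous_iff_continuousAt]
  intro x
  rcases eq_or_ne x 0 with rfl | hx
  · have h0 : |(0:ℝ)| ^ (p - 2) * (0:ℝ) = 0 := by ring
    have : ContinuousAt (fun x : ℝ => |x| ^ (p - 2) * x) 0 ↔
        Tendsto (fun x : ℝ => |x| ^ (p - 2) * x) (𝓝 0) (𝓝 0) := by
      rw [ContinuousAt]
      exact Iff.of_eq (congrArg _ (congrArg _ (by simpa using h0)))
    rw [this]
    apply squeeze_zero_norm (a := fun x : ℝ => |x| ^ (p - 1))
    · intro t
      rcases eq_or_ne t 0 with rfl | ht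
      · simp [Real.zero_rpow (by intro h; linarith : p - 1 ≠ 0)]
      · have habs : (0:ℝ) < |t| := abs_pos.mpr ht
        have hnorm : ‖|t| ^ (p - 2) * t‖ = |t| ^ (p - 2) * |t| := by
          rw [norm_mul, Real.norm_eq_abs, Real.norm_eq_abs,
            abs_of_nonneg (Real.rpow_nonneg (abs_nonneg t) _)]
        rw [hnorm]
        have : |t| ^ (p - 2) * |t| = |t| ^ (p - 1) := by
          rw [show p - 1 = p - 2 + 1 by ring, Real.rpow_add habs, Real.rpow_one]
        exact le_of_eq this
    · have h1 : ContinuousAt (fun y : ℝ => y ^ (p - 1)) 0 :=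
        Real.continuousAt_rpow_const 0 (p - 1) (Or.inr (by linarith))
      have h2 := ContinuousAt.comp (x := (0:ℝ)) (g := fun y : ℝ => y ^ (p - 1))
        (by rw [abs_zero]; exact h1) continuous_abs.continuousAt
      simp only [Function.comp_def] at h2
      have h3 : |(0:ℝ)| ^ (p - 1) = 0 := by
        simp [Real.zero_rpow (by intro h; linarith : p - 1 ≠ 0)]
      have h4 : (0:ℝ) ^ (p - 1) = 0 := Real.zero_rpow (by intro h; linarith)
      simpa [ContinuousAt, abs_zero, h4] using h2
  · have h1 := ContinuousAt.comp (x := x) (g := fun y : ℝ => y ^ (p - 2))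
      (Real.continuousAt_rpow_const |x| (p - 2) (Or.inl (abs_ne_zero.mpr hx)))
      continuous_abs.continuousAt
    simp only [Function.comp_def] at h1
    exact h1.mul continuousAt_id
/-- in the `p`-stochastically complete case, every global radial solution
is strictly decreasing and vanishes at infinity. -/
theorem statement_8 (n : ℕ) (hn : 2 ≤ n) (p q : ℝ) (hp1 : 1 < p) (hpn : p < n)
    (hq : (n : ℝ) * p / ((n : ℝ) - p) - 1 ≤ q)
    (ψ : ℝ → ℝ) (hψ : IsCHModel ψ)
    (hpc : Tendsto (fun r : ℝ => ∫ s in (0:ℝ)..r, Theta n ψ s ^ (1 / (p - 1)))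
      atTop atTop)
    (α : ℝ) (hα : 0 < α)
    (u : ℝ → ℝ) (hu : IsRadialSolution n p q ψ ⊤ α u) :
    StrictAntiOn u (Set.Ioi (0:ℝ)) ∧ Tendsto u atTop (nhds 0) := by
  obtain ⟨hsmooth, hψ0, hψ'0, hconv, hψpos⟩ := hψ
  have hTlt : ∀ r : ℝ, ENNReal.ofReal r < (⊤ : ℝ≥0∞) := fun r => ENNReal.ofReal_lt_top
  have hnp : 0 < (n:ℝ) - p := by linarith
  have hq0 : 0 < q := by
    have h1 : (1:ℝ) < (n:ℝ) * p / ((n:ℝ) - p) := by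
      rw [lt_div_iff₀ hnp]; nlinarith
    linarith
  have hupos : ∀ r : ℝ, 0 ≤ r → 0 < u r := fun r hr => hu.pos r hr (hTlt r)
  have hudiff : ∀ r : ℝ, 0 ≤ r → DifferentiableAt ℝ u r := fun r hr => hu.diff r hr (hTlt r)
  have hucont : ∀ r : ℝ, 0 ≤ r → ContinuousAt u r := fun r hr => (hudiff r hr).continuousAt
  have hset : {r : ℝ | 0 ≤ r ∧ ENNReal.ofReal r < (⊤:ℝ≥0∞)} = Set.Ici (0:ℝ) := by
    ext r; simp [ENNReal.ofReal_lt_top]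
  have hu'cont : ContinuousOn (deriv u) (Set.Ici (0:ℝ)) := by
    have h := hu.deriv_cont; rwa [hset] at h
  have hn1 : n - 1 ≠ 0 := by omega
  have hψcont : Continuous ψ := hsmooth.continuous
  have hψnonneg : ∀ x : ℝ, 0 ≤ x → 0 ≤ ψ x := by
    intro x hx
    rcases hx.eq_or_lt with h | h
    · rw [← h, hψ0]
    · exact (hψpos x h).le
  set g : ℝ → ℝ := fun s => ψ s ^ (n - 1) * |deriv u s| ^ (p - 2) * deriv u s with hg
  have hg0 : g 0 = 0 := by simp [hg, hψ0, zero_pow hn1]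
  have hgcont : ContinuousOn g (Set.Ici (0:ℝ)) := by
    have h1 : ContinuousOn (fun s => |deriv u s| ^ (p - 2) * deriv u s) (Set.Ici (0:ℝ)) :=
      (phi_cont hp1).comp_continuousOn hu'cont
    have h2 : ContinuousOn (fun s => ψ s ^ (n - 1) * (|deriv u s| ^ (p - 2) * deriv u s))
        (Set.Ici (0:ℝ)) :=
      ((hψcont.pow (n - 1)).continuousOn (s := Set.Ici (0:ℝ))).mul h1
    simpa [hg, mul_assoc] using h2
  have hIntPsi : ∀ a b : ℝ, IntervalIntegrable (fun s => ψ s ^ (n - 1)) volume a b :=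
    fun a b => (hψcont.pow _).intervalIntegrable a b
  have huqcont : ContinuousOn (fun s => ψ s ^ (n - 1) * u s ^ q) (Set.Ici (0:ℝ)) := by
    apply ((hψcont.pow _).continuousOn).mul
    apply ContinuousOn.rpow_const
    · exact fun r hr => (hucont r hr).continuousWithinAt
    · exact fun r hr => Or.inr hq0.le
  have hIntUq : ∀ r : ℝ, 0 ≤ r →
      IntervalIntegrable (fun s => ψ s ^ (n - 1) * u s ^ q) volume 0 r := by
    intro r hr
    apply ContinuousOn.intervalIntegrable
    apply huqcont.mono
    rw [Set.uIcc_of_le hr]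
    exact Set.Icc_subset_Ici_self
  have keyg : ∀ r : ℝ, 0 < r → g r = -∫ s in (0:ℝ)..r, ψ s ^ (n - 1) * u s ^ q := by
    intro r hr
    have hftc : ∫ y in (0:ℝ)..r, -(ψ y ^ (n - 1) * u y ^ q) = g r - g 0 := by
      apply intervalIntegral.integral_eq_sub_of_hasDeriv_right_of_le hr.le
        (hgcont.mono Set.Icc_subset_Ici_self)
        (fun x hx => ((hu.eqn x hx.1 (hTlt x)).hasDerivWithinAt))
      exact (hIntUq r hr.le).neg
    rw [hg0, sub_zero, intervalIntegral.integral_neg] at hftc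
    linarith
  have hGpos : ∀ r : ℝ, 0 < r → 0 < ∫ s in (0:ℝ)..r, ψ s ^ (n - 1) * u s ^ q := by
    intro r hr
    apply intervalIntegral.intervalIntegral_pos_of_pos_on (hIntUq r hr.le)
    · intro x hx
      have h1 := hψpos x hx.1
      have h2 := hupos x hx.1.le
      positivity
    · exact hr
  have hu'neg : ∀ r : ℝ, 0 < r → deriv u r < 0 := by
    intro r hr
    by_contra hcon
    push_neg at hcon
    have hgr : g r < 0 := by rw [keyg r hr]; linarith [hGpos r hr]
    have hge : 0 ≤ g r :=
      mul_nonneg (mul_nonneg (pow_nonneg (hψpos r hr).le _)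
        (Real.rpow_nonneg (abs_nonneg _) _)) hcon
    linarith
  have hanti : StrictAntiOn u (Set.Ioi (0:ℝ)) := by
    apply strictAntiOn_of_deriv_neg (convex_Ioi 0)
    · exact fun r hr => (hucont r (le_of_lt hr)).continuousWithinAt
    · intro x hx; rw [interior_Ioi] at hx; exact hu'neg x hx
  have hantiIci : AntitoneOn u (Set.Ici (0:ℝ)) := by
    apply antitoneOn_of_deriv_nonpos (convex_Ici 0)
    · exact fun r hr => (hucont r hr).continuousWithinAt
    · intro x hx; rw [interior_Ici] at hx; exact (hudiff x hx.le).differentiableWithinAt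
    · intro x hx; rw [interior_Ici] at hx; exact (hu'neg x hx).le
  -- continuity of Θ^e on (0,∞)
  have hprim : Continuous (fun b : ℝ => ∫ s in (0:ℝ)..b, ψ s ^ (n - 1)) :=
    intervalIntegral.continuous_primitive hIntPsi 0
  have hp1' : (0:ℝ) < p - 1 := by linarith
  have he0 : (0:ℝ) ≤ 1 / (p - 1) := by positivity
  have hThetaCont : ContinuousOn (Theta n ψ) (Set.Ioi (0:ℝ)) := by
    unfold Theta
    apply hprim.continuousOn.div ((hψcont.pow _).continuousOn)
    intro x hx
    exact pow_ne_zero _ (hψpos x hx).ne'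
  have hThcont : ContinuousOn (fun s => Theta n ψ s ^ (1 / (p - 1))) (Set.Ioi (0:ℝ)) :=
    hThetaCont.rpow_const (fun x _ => Or.inr he0)
  have hTh1b : ∀ b : ℝ, 1 ≤ b →
      IntervalIntegrable (fun s => Theta n ψ s ^ (1 / (p - 1))) volume 1 b := by
    intro b hb
    apply ContinuousOn.intervalIntegrable
    apply hThcont.mono
    rw [Set.uIcc_of_le hb]
    intro x hx
    exact lt_of_lt_of_le one_pos hx.1
  have hTh01 : IntervalIntegrable (fun s => Theta n ψ s ^ (1 / (p - 1))) volume 0 1 := by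
    by_contra hcon
    have hz : ∀ b : ℝ, 1 ≤ b → (∫ s in (0:ℝ)..b, Theta n ψ s ^ (1 / (p - 1))) = 0 := by
      intro b hb
      apply intervalIntegral.integral_undef
      intro hint
      apply hcon
      apply hint.mono_set
      rw [Set.uIcc_of_le (by norm_num : (0:ℝ) ≤ 1), Set.uIcc_of_le (by linarith : (0:ℝ) ≤ b)]
      exact Set.Icc_subset_Icc_right hb
    obtain ⟨b, hb1, hb2⟩ :=
      ((hpc.eventually_ge_atTop 1).and (eventually_ge_atTop (1:ℝ))).exists
    rw [hz b hb2] at hb1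
    linarith
  -- infimum
  have hne : (u '' Set.Ici 1).Nonempty := ⟨u 1, ⟨1, Set.mem_Ici.mpr le_rfl, rfl⟩⟩
  have hbdd : BddBelow (u '' Set.Ici 1) := by
    refine ⟨0, ?_⟩
    rintro x ⟨r, hr, rfl⟩
    exact (hupos r (by linarith [Set.mem_Ici.mp hr])).le
  set L := sInf (u '' Set.Ici 1) with hLdef
  have hL0 : 0 ≤ L := by
    apply le_csInf hne
    rintro x ⟨r, hr, rfl⟩
    exact (hupos r (by linarith [Set.mem_Ici.mp hr])).le
  have hLle : ∀ s : ℝ, 0 ≤ s → L ≤ u s := by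
    intro s hs
    rcases le_total 1 s with h | h
    · exact csInf_le hbdd ⟨s, Set.mem_Ici.mpr h, rfl⟩
    · exact le_trans (csInf_le hbdd ⟨1, Set.mem_Ici.mpr le_rfl, rfl⟩)
        (hantiIci (Set.mem_Ici.mpr hs) (Set.mem_Ici.mpr (by norm_num)) h)
  have hLzero : L = 0 := by
    by_contra hne0
    have hLpos : 0 < L := lt_of_le_of_ne hL0 (Ne.symm hne0)
    have hB : ∀ r : ℝ, 0 < r →
        (L ^ q) ^ (1 / (p - 1)) * Theta n ψ r ^ (1 / (p - 1)) ≤ -(deriv u r) := by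
      intro r hr
      have hψr : 0 < ψ r ^ (n - 1) := pow_pos (hψpos r hr) _
      have hNnonneg : 0 ≤ ∫ s in (0:ℝ)..r, ψ s ^ (n - 1) := by
        apply intervalIntegral.integral_nonneg hr.le
        intro x hx
        exact pow_nonneg (hψnonneg x hx.1) _
      have hThnonneg : 0 ≤ Theta n ψ r := by
        simp only [Theta]
        exact div_nonneg hNnonneg hψr.le
      have hA : L ^ q * Theta n ψ r ≤ |deriv u r| ^ (p - 1) := by
        have hmono : (∫ s in (0:ℝ)..r, ψ s ^ (n - 1) * L ^ q) ≤
            ∫ s in (0:ℝ)..r, ψ s ^ (n - 1) * u s ^ q := by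
          apply intervalIntegral.integral_mono_on hr.le
          · exact ((hψcont.pow _).mul continuous_const).intervalIntegrable _ _
          · exact hIntUq r hr.le
          · intro x hx
            have h1 : L ^ q ≤ u x ^ q :=
              Real.rpow_le_rpow hLpos.le (hLle x hx.1) hq0.le
            exact mul_le_mul_of_nonneg_left h1 (pow_nonneg (hψnonneg x hx.1) _)
        have hval : (∫ s in (0:ℝ)..r, ψ s ^ (n - 1) * L ^ q)
            = L ^ q * ∫ s in (0:ℝ)..r, ψ s ^ (n - 1) := by
          rw [intervalIntegral.integral_mul_const, mul_comm]
        have hu'r := hu'neg r hr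
        have habs0 : 0 < |deriv u r| := abs_pos.mpr hu'r.ne
        have hgexp : g r = -(ψ r ^ (n - 1) * |deriv u r| ^ (p - 1)) := by
          have h1 : |deriv u r| ^ (p - 2) * deriv u r = -(|deriv u r| ^ (p - 1)) := by
            have h2 : |deriv u r| ^ (p - 1) = |deriv u r| ^ (p - 2) * |deriv u r| := by
              rw [show p - 1 = p - 2 + 1 by ring, Real.rpow_add habs0, Real.rpow_one]
            rw [h2, abs_of_neg hu'r]
            ring
          calc g r = ψ r ^ (n - 1) * (|deriv u r| ^ (p - 2) * deriv u r) := by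
                rw [hg]; ring
            _ = -(ψ r ^ (n - 1) * |deriv u r| ^ (p - 1)) := by rw [h1]; ring
        have hGeq : ψ r ^ (n - 1) * |deriv u r| ^ (p - 1)
            = ∫ s in (0:ℝ)..r, ψ s ^ (n - 1) * u s ^ q := by
          have h3 := keyg r hr
          rw [hgexp] at h3
          linarith
        simp only [Theta]
        rw [← mul_div_assoc, div_le_iff₀ hψr]
        calc L ^ q * ∫ s in (0:ℝ)..r, ψ s ^ (n - 1)
            ≤ ∫ s in (0:ℝ)..r, ψ s ^ (n - 1) * u s ^ q := by rw [← hval]; exact hmono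
          _ = ψ r ^ (n - 1) * |deriv u r| ^ (p - 1) := hGeq.symm
          _ = |deriv u r| ^ (p - 1) * ψ r ^ (n - 1) := by ring
      have h2 : (L ^ q * Theta n ψ r) ^ (1 / (p - 1)) ≤
          (|deriv u r| ^ (p - 1)) ^ (1 / (p - 1)) := by
        apply Real.rpow_le_rpow
          (mul_nonneg (Real.rpow_nonneg hLpos.le q) hThnonneg) hA he0
      have h3 : (|deriv u r| ^ (p - 1)) ^ (1 / (p - 1)) = |deriv u r| := by
        rw [← Real.rpow_mul (abs_nonneg _), mul_one_div,
          div_self hp1'.ne', Real.rpow_one]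
      rw [Real.mul_rpow (Real.rpow_nonneg hLpos.le q) hThnonneg, h3] at h2
      rwa [abs_of_neg (hu'neg r hr)] at h2
    set c := (L ^ q) ^ (1 / (p - 1)) with hc
    have hcpos : 0 < c := Real.rpow_pos_of_pos (Real.rpow_pos_of_pos hLpos q) _
    have hkey : ∀ b : ℝ, 1 ≤ b → c * ((∫ s in (0:ℝ)..b, Theta n ψ s ^ (1 / (p - 1))) -
        (∫ s in (0:ℝ)..1, Theta n ψ s ^ (1 / (p - 1)))) ≤ u 1 - u b := by
      intro b hb
      have hftc2 : ∫ s in (1:ℝ)..b, deriv u s = u b - u 1 := by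
        apply intervalIntegral.integral_eq_sub_of_hasDerivAt
        · intro x hx
          rw [Set.uIcc_of_le hb] at hx
          exact (hudiff x (by linarith [hx.1])).hasDerivAt
        · apply ContinuousOn.intervalIntegrable
          apply hu'cont.mono
          rw [Set.uIcc_of_le hb]
          intro x hx
          exact le_trans (by norm_num) hx.1
      have hu'int : IntervalIntegrable (deriv u) volume 1 b := by
        apply ContinuousOn.intervalIntegrable
        apply hu'cont.mono
        rw [Set.uIcc_of_le hb]
        intro x hx
        exact le_trans (by norm_num) hx.1
      have hmono2 : ∫ s in (1:ℝ)..b, c * Theta n ψ s ^ (1 / (p - 1)) ≤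
          ∫ s in (1:ℝ)..b, -(deriv u s) := by
        apply intervalIntegral.integral_mono_on hb
        · exact (hTh1b b hb).const_mul c
        · exact hu'int.neg
        · intro x hx
          exact hB x (lt_of_lt_of_le one_pos hx.1)
      rw [intervalIntegral.integral_neg, hftc2, intervalIntegral.integral_const_mul] at hmono2
      have hsplit : (∫ s in (0:ℝ)..1, Theta n ψ s ^ (1 / (p - 1))) +
          (∫ s in (1:ℝ)..b, Theta n ψ s ^ (1 / (p - 1))) =
          ∫ s in (0:ℝ)..b, Theta n ψ s ^ (1 / (p - 1)) :=
        intervalIntegral.integral_add_adjacent_intervals hTh01 (hTh1b b hb)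
      have hre : (∫ s in (1:ℝ)..b, Theta n ψ s ^ (1 / (p - 1))) =
          (∫ s in (0:ℝ)..b, Theta n ψ s ^ (1 / (p - 1))) -
          (∫ s in (0:ℝ)..1, Theta n ψ s ^ (1 / (p - 1))) := by linarith
      rw [hre] at hmono2
      linarith
    obtain ⟨b, hbI, hb1⟩ := ((hpc.eventually_ge_atTop
      ((∫ s in (0:ℝ)..1, Theta n ψ s ^ (1 / (p - 1))) + (u 1 + 1) / c)).and
      (eventually_ge_atTop (1:ℝ))).exists
    have h1 := hkey b hb1
    have h2 : (u 1 + 1) / c ≤ (∫ s in (0:ℝ)..b, Theta n ψ s ^ (1 / (p - 1))) -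
        (∫ s in (0:ℝ)..1, Theta n ψ s ^ (1 / (p - 1))) := by linarith
    have h3 : c * ((u 1 + 1) / c) = u 1 + 1 := by field_simp
    have h4 := mul_le_mul_of_nonneg_left h2 hcpos.le
    rw [h3] at h4
    have h5 := hupos b (by linarith : (0:ℝ) ≤ b)
    linarith
  refine ⟨hanti, ?_⟩
  rw [Metric.tendsto_atTop]
  intro ε hε
  have hlt : sInf (u '' Set.Ici 1) < ε := by
    rw [← hLdef, hLzero]; exact hε
  obtain ⟨x, ⟨r₀, hr₀, rfl⟩, hxε⟩ := exists_lt_of_csInf_lt hne hlt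
  refine ⟨r₀, fun r hr => ?_⟩
  have hr₀0 : (0:ℝ) ≤ r₀ := by linarith [Set.mem_Ici.mp hr₀]
  have h1 : u r ≤ u r₀ :=
    hantiIci (Set.mem_Ici.mpr hr₀0) (Set.mem_Ici.mpr (by linarith)) hr
  have h2 : 0 < u r := hupos r (by linarith)
  rw [Real.dist_eq, sub_zero, abs_of_pos h2]
  linarith
end
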